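/- arXiv:2403.18704 — 8 statements merged into one kernel-verified Lean document; each statement's English description precedes it below -/
import Mathlib

section
/- Let ψ be an index function, extended by −∞ on (−∞,0), with convex conjugate (−ψ)*(s) := sup_{t ≥ 0}(s·t + ψ(t)). Let α, c₁, c₂, C₃ > 0 and d, err, res ≥ 0, set c̃₁ := c₁/C₃, and assume (−ψ)*(−c̃₁/α) and (−ψ)*(−c̃₁/(2α)) are finite. If c₁·res + c₂·α·err ≤ d + α·ψ(C₃·res), then err ≤ (1/c₂)·(d/α + (−ψ)*(−c̃₁/α)) and res ≤ (2/c₁)·(d + α·(−ψ)*(−c̃₁/(2α))). -/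
/-
Both bounds are instances of the Fenchel–Young inequality `s t + ψ t ≤ (-ψ)*(s)` at
`t = C₃ res`: with `s = -c̃₁/β` it reads `β ψ(C₃ res) ≤ c₁ res + β (-ψ)*(-c̃₁/β)`.
Taking `β = α` absorbs the `ψ`-term against `c₁ res` and leaves the bound on `err`;
taking `β = 2α` absorbs only half of `c₁ res`, and the remaining half bounds `res`.
-/

/-- The convex conjugate of `-ψ`, where the index function `ψ : [0,∞) → [0,∞)` is
extended by `-∞` on `(-∞,0)`:  `(-ψ)*(s) = sup_{t ≥ 0} (s·t + ψ(t)) ∈ [0,∞]`. -/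
noncomputable def negConj (ψ : ℝ → ℝ) (s : ℝ) : EReal :=
  ⨆ t : {t : ℝ // 0 ≤ t}, ((s * t.1 + ψ t.1 : ℝ) : EReal)

theorem coe_le_negConj (ψ : ℝ → ℝ) (s : ℝ) {t : ℝ} (ht : 0 ≤ t) :
    ((s * t + ψ t : ℝ) : EReal) ≤ negConj ψ s :=
  le_iSup (fun u : {u : ℝ // 0 ≤ u} => ((s * u.1 + ψ u.1 : ℝ) : EReal)) ⟨t, ht⟩

theorem mul_add_le_toReal_negConj (ψ : ℝ → ℝ) (s : ℝ) {t : ℝ} (ht : 0 ≤ t)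
    (hfin : negConj ψ s ≠ ⊤) : s * t + ψ t ≤ (negConj ψ s).toReal := by
  simpa only [EReal.toReal_coe] using
    EReal.toReal_le_toReal (coe_le_negConj ψ s ht) (EReal.coe_ne_bot _) hfin

theorem mul_apply_le_add_toReal_negConj (ψ : ℝ → ℝ) {β c C r : ℝ} (hβ : 0 < β) (hC : 0 < C)
    (hr : 0 ≤ r) (hfin : negConj ψ (-(c / C) / β) ≠ ⊤) :
    β * ψ (C * r) ≤ c * r + β * (negConj ψ (-(c / C) / β)).toReal := by
  have hFY := mul_add_le_toReal_negConj ψ _ (mul_nonneg hC.le hr) hfin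
  have hlin : -(c / C) / β * (C * r) = -(c * r) / β := by field_simp
  rw [hlin] at hFY
  calc β * ψ (C * r) = c * r + β * (-(c * r) / β + ψ (C * r)) := by field_simp; ring
    _ ≤ c * r + β * (negConj ψ (-(c / C) / β)).toReal := by gcongr

theorem stmt_0_general (ψ : ℝ → ℝ)
    (α c₁ c₂ C₃ d err res : ℝ)
    (hα : 0 < α) (hc₁ : 0 < c₁) (hc₂ : 0 < c₂) (hC₃ : 0 < C₃)
    (herr : 0 ≤ err) (hres : 0 ≤ res)
    (hfin1 : negConj ψ (-(c₁ / C₃) / α) ≠ ⊤)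
    (hfin2 : negConj ψ (-(c₁ / C₃) / (2 * α)) ≠ ⊤)
    (hmain : c₁ * res + c₂ * α * err ≤ d + α * ψ (C₃ * res)) :
    err ≤ (1 / c₂) * (d / α + (negConj ψ (-(c₁ / C₃) / α)).toReal) ∧
      res ≤ (2 / c₁) * (d + α * (negConj ψ (-(c₁ / C₃) / (2 * α))).toReal) := by
  set B₁ := (negConj ψ (-(c₁ / C₃) / α)).toReal
  set B₂ := (negConj ψ (-(c₁ / C₃) / (2 * α))).toReal
  have hFY₁ : α * ψ (C₃ * res) ≤ c₁ * res + α * B₁ :=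
    mul_apply_le_add_toReal_negConj ψ hα hC₃ hres hfin1
  have hFY₂ : 2 * α * ψ (C₃ * res) ≤ c₁ * res + 2 * α * B₂ :=
    mul_apply_le_add_toReal_negConj ψ (by positivity) hC₃ hres hfin2
  have hc₂αerr : 0 ≤ c₂ * α * err := by positivity
  constructor
  · rw [one_div_mul_eq_div, le_div_iff₀ hc₂, ← mul_le_mul_iff_right₀ hα]
    calc α * (err * c₂) = c₂ * α * err := by ring
      _ ≤ d + α * B₁ := by linarith
      _ = α * (d / α + B₁) := by field_simp
  · rw [div_mul_eq_mul_div, le_div_iff₀ hc₁]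
    linarith

theorem stmt_0 (ψ : ℝ → ℝ)
    (hψcont : ContinuousOn ψ (Set.Ici (0 : ℝ)))
    (hψmono : MonotoneOn ψ (Set.Ici (0 : ℝ)))
    (hψ0 : ψ 0 = 0) (hψnn : ∀ t : ℝ, 0 ≤ t → 0 ≤ ψ t)
    (α c₁ c₂ C₃ d err res : ℝ)
    (hα : 0 < α) (hc₁ : 0 < c₁) (hc₂ : 0 < c₂) (hC₃ : 0 < C₃)
    (hd : 0 ≤ d) (herr : 0 ≤ err) (hres : 0 ≤ res)
    (hfin1 : negConj ψ (-(c₁ / C₃) / α) ≠ ⊤)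
    (hfin2 : negConj ψ (-(c₁ / C₃) / (2 * α)) ≠ ⊤)
    (hmain : c₁ * res + c₂ * α * err ≤ d + α * ψ (C₃ * res)) :
    err ≤ (1 / c₂) * (d / α + (negConj ψ (-(c₁ / C₃) / α)).toReal) ∧
      res ≤ (2 / c₁) * (d + α * (negConj ψ (-(c₁ / C₃) / (2 * α))).toReal) :=
  stmt_0_general ψ α c₁ c₂ C₃ d err res hα hc₁ hc₂ hC₃ herr hres hfin1 hfin2 hmain
end

section
/- Assume additionally that there is L > 0 such that for every q ∈ D and all u₁, u₂ ∈ V: ‖u₁ − u₂‖_V ≤ L·‖A(q,u₁) − A(q,u₂)‖_W. If the reduced variational source condition holds, i.e., there is b ∈ (0,1) such that for all q ∈ D: −⟨ξ, q − q†⟩ ≤ b·Δ_ξ(q, q†) + ψ(‖𝐅(q) − 𝐅(q†)‖^p), then the all-at-once variational source condition holds with ψ(t) replaced by ψ(C̄·t), where C̄ := 2^{p−1}·max{1, ‖𝒞‖^p·L^p}: for all (q,u) ∈ D × V, −⟨ξ, q − q†⟩ ≤ b·Δ_ξ(q, q†) + ψ(C̄·‖𝔽(q,u) − 𝔽(q†,u†)‖^p).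 -/
/-!
The reduced residual `‖𝒞 S(q) − 𝒞 u†‖` is controlled by the all-at-once residual at any `u`:
passing through `𝒞 u`, the error `‖S(q) − u‖` is at most `L‖A(q,u)‖` because `A(q, S(q)) = 0`,
so `‖𝒞 S(q) − 𝒞 u†‖ ≤ ‖𝒞‖ L ‖A(q,u)‖ + ‖𝒞u − 𝒞u†‖`. Convexity of `t ↦ tᵖ` turns this into
`‖𝐅(q) − 𝐅(q†)‖ᵖ ≤ C̄ ‖𝔽(q,u) − 𝔽(q†,u†)‖ᵖ`, and the claim follows from the reduced
condition since `ψ` is monotone.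
-/

lemma rpow_add_le_mul_rpow_add_rpow_of_nonneg {x y p : ℝ} (hx : 0 ≤ x) (hy : 0 ≤ y)
    (hp : 1 ≤ p) : (x + y) ^ p ≤ 2 ^ (p - 1) * (x ^ p + y ^ p) := by
  lift x to NNReal using hx
  lift y to NNReal using hy
  exact_mod_cast NNReal.rpow_add_le_mul_rpow_add_rpow x y hp

lemma mul_add_rpow_le_max_mul {a x y p : ℝ} (ha : 0 ≤ a) (hx : 0 ≤ x) (hy : 0 ≤ y)
    (hp : 1 ≤ p) : (a * x + y) ^ p ≤ 2 ^ (p - 1) * max 1 (a ^ p) * (x ^ p + y ^ p) := by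
  have hxp : 0 ≤ x ^ p := Real.rpow_nonneg hx p
  have hyp : 0 ≤ y ^ p := Real.rpow_nonneg hy p
  calc (a * x + y) ^ p ≤ 2 ^ (p - 1) * ((a * x) ^ p + y ^ p) :=
        rpow_add_le_mul_rpow_add_rpow_of_nonneg (mul_nonneg ha hx) hy hp
    _ = 2 ^ (p - 1) * (a ^ p * x ^ p + 1 * y ^ p) := by rw [Real.mul_rpow ha hx, one_mul]
    _ ≤ 2 ^ (p - 1) * (max 1 (a ^ p) * x ^ p + max 1 (a ^ p) * y ^ p) := by
        gcongr
        exacts [le_max_right _ _, le_max_left _ _]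
    _ = 2 ^ (p - 1) * max 1 (a ^ p) * (x ^ p + y ^ p) := by ring

lemma ContinuousLinearMap.norm_sub_le_opNorm_mul_add {V Z : Type*}
    [SeminormedAddCommGroup V] [NormedSpace ℝ V] [SeminormedAddCommGroup Z] [NormedSpace ℝ Z]
    (C : V →L[ℝ] Z) (v u : V) (z : Z) : ‖C v - z‖ ≤ ‖C‖ * ‖v - u‖ + ‖C u - z‖ :=
  calc ‖C v - z‖ ≤ ‖C v - C u‖ + ‖C u - z‖ := norm_sub_le_norm_sub_add_norm_sub _ _ _
    _ ≤ ‖C‖ * ‖v - u‖ + ‖C u - z‖ := by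
        rw [← map_sub]
        gcongr
        exact C.le_opNorm _

lemma rpow_norm_obs_sub_le_of_zero {V W Z : Type*}
    [SeminormedAddCommGroup V] [NormedSpace ℝ V] [SeminormedAddCommGroup W]
    [SeminormedAddCommGroup Z] [NormedSpace ℝ Z]
    (F : V → W) (C : V →L[ℝ] Z) {L p : ℝ} (hL : 0 ≤ L) (hp : 1 ≤ p) {v : V} (hv : F v = 0)
    (hLip : ∀ u, ‖v - u‖ ≤ L * ‖F v - F u‖) (u : V) (z : Z) :
    ‖C v - z‖ ^ p ≤ 2 ^ (p - 1) * max 1 (‖C‖ ^ p * L ^ p) * (‖F u‖ ^ p + ‖C u - z‖ ^ p) := by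
  have hvu : ‖v - u‖ ≤ L * ‖F u‖ := by simpa [hv] using hLip u
  have hobs : ‖C v - z‖ ≤ ‖C‖ * L * ‖F u‖ + ‖C u - z‖ :=
    calc ‖C v - z‖ ≤ ‖C‖ * ‖v - u‖ + ‖C u - z‖ := C.norm_sub_le_opNorm_mul_add v u z
      _ ≤ ‖C‖ * (L * ‖F u‖) + ‖C u - z‖ := by gcongr
      _ = ‖C‖ * L * ‖F u‖ + ‖C u - z‖ := by ring
  calc ‖C v - z‖ ^ p ≤ (‖C‖ * L * ‖F u‖ + ‖C u - z‖) ^ p := by gcongr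
    _ ≤ 2 ^ (p - 1) * max 1 ((‖C‖ * L) ^ p) * (‖F u‖ ^ p + ‖C u - z‖ ^ p) :=
        mul_add_rpow_le_max_mul (by positivity) (norm_nonneg _) (norm_nonneg _) hp
    _ = 2 ^ (p - 1) * max 1 (‖C‖ ^ p * L ^ p) * (‖F u‖ ^ p + ‖C u - z‖ ^ p) := by
        rw [Real.mul_rpow (norm_nonneg _) hL]

theorem stmt_2_general {Q V W Z : Type*}
    [NormedAddCommGroup Q] [NormedSpace ℝ Q]
    [NormedAddCommGroup V] [NormedSpace ℝ V]
    [NormedAddCommGroup W] [NormedSpace ℝ W]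
    [NormedAddCommGroup Z] [NormedSpace ℝ Z]
    (D : Set Q) (A : Q → V → W) (obs : V →L[ℝ] Z) (S : Q → V)
    (hS : ∀ q ∈ D, A q (S q) = 0)
    (p : ℝ) (hp : 1 ≤ p)
    (qd : Q) (hqd : qd ∈ D)
    (Rcheck : Q → ℝ)
    (ξ : Q →L[ℝ] ℝ)
    (ψ : ℝ → ℝ)
    (hψmono : MonotoneOn ψ (Set.Ici (0 : ℝ)))
    (L : ℝ) (hL : 0 < L)
    (hLip : ∀ q ∈ D, ∀ u₁ u₂ : V, ‖u₁ - u₂‖ ≤ L * ‖A q u₁ - A q u₂‖)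
    (b : ℝ)
    (hRED : ∀ q ∈ D,
      -(ξ (q - qd)) ≤ b * (Rcheck q - Rcheck qd - ξ (q - qd)) +
        ψ (‖obs (S q) - obs (S qd)‖ ^ p)) :
    ∀ q ∈ D, ∀ u : V,
      -(ξ (q - qd)) ≤ b * (Rcheck q - Rcheck qd - ξ (q - qd)) +
        ψ ((2 : ℝ) ^ (p - 1) * max 1 (‖obs‖ ^ p * L ^ p) *
          (‖A q u - A qd (S qd)‖ ^ p + ‖obs u - obs (S qd)‖ ^ p)) := by
  intro q hq u
  have hres := rpow_norm_obs_sub_le_of_zero (A q) obs hL.le hp (hS q hq)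
    (hLip q hq (S q)) u (obs (S qd))
  rw [hS qd hqd, sub_zero]
  refine (hRED q hq).trans (add_le_add_right (hψmono ?_ ?_ hres) _)
  · exact Real.rpow_nonneg (norm_nonneg _) p
  · exact (Real.rpow_nonneg (norm_nonneg _) p).trans hres

/-- If the inverse of `A(q,·)` is uniformly Lipschitz and the reduced variational
source condition holds, then the all-at-once variational source condition holds with
`ψ(t)` replaced by `ψ(C̄·t)`, `C̄ = 2^{p-1}·max{1, ‖𝒞‖^p·L^p}`. -/
theorem stmt_2 {Q V W Z : Type*}
    [NormedAddCommGroup Q] [NormedSpace ℝ Q]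
    [NormedAddCommGroup V] [NormedSpace ℝ V]
    [NormedAddCommGroup W] [NormedSpace ℝ W]
    [NormedAddCommGroup Z] [NormedSpace ℝ Z]
    (D : Set Q) (A : Q → V → W) (obs : V →L[ℝ] Z) (S : Q → V)
    (hS : ∀ q ∈ D, A q (S q) = 0)
    (p : ℝ) (hp : 1 ≤ p)
    (qd : Q) (hqd : qd ∈ D)
    (Rcheck : Q → ℝ) (hRnn : ∀ q, 0 ≤ Rcheck q)
    (ξ : Q →L[ℝ] ℝ) (hξ : ∀ q ∈ D, ξ (q - qd) ≤ Rcheck q - Rcheck qd)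
    (ψ : ℝ → ℝ) (hψcont : ContinuousOn ψ (Set.Ici (0 : ℝ)))
    (hψmono : MonotoneOn ψ (Set.Ici (0 : ℝ)))
    (hψ0 : ψ 0 = 0) (hψnn : ∀ t : ℝ, 0 ≤ t → 0 ≤ ψ t)
    (L : ℝ) (hL : 0 < L)
    (hLip : ∀ q ∈ D, ∀ u₁ u₂ : V, ‖u₁ - u₂‖ ≤ L * ‖A q u₁ - A q u₂‖)
    (b : ℝ) (hb0 : 0 < b) (hb1 : b < 1)
    (hRED : ∀ q ∈ D,
      -(ξ (q - qd)) ≤ b * (Rcheck q - Rcheck qd - ξ (q - qd)) +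
        ψ (‖obs (S q) - obs (S qd)‖ ^ p)) :
    ∀ q ∈ D, ∀ u : V,
      -(ξ (q - qd)) ≤ b * (Rcheck q - Rcheck qd - ξ (q - qd)) +
        ψ ((2 : ℝ) ^ (p - 1) * max 1 (‖obs‖ ^ p * L ^ p) *
          (‖A q u - A qd (S qd)‖ ^ p + ‖obs u - obs (S qd)‖ ^ p)) :=
  stmt_2_general D A obs S hS p hp qd hqd Rcheck ξ ψ hψmono L hL hLip b hRED
end

section
/- Fix q ∈ D and assume ‖u₁ − u₂‖_V ≤ L·‖A(q,u₁) − A(q,u₂)‖_W for all u₁, u₂ ∈ V, where L > 0. Then for every u ∈ V: ‖𝐅(q) − 𝐅(q†)‖^p = ‖𝒞(S(q)) − 𝒞(S(q†))‖^p ≤ 2^{p−1}·(‖𝒞(u − u†)‖^p + ‖𝒞‖^p·L^p·‖A(q,u)‖^p) ≤ C̄·‖𝔽(q,u) − 𝔽(q†,u†)‖^p, where C̄ := 2^{p−1}·max{1, ‖𝒞‖^p·L^p}. -/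
lemma aux_add_rpow {a b : ℝ} (ha : 0 ≤ a) (hb : 0 ≤ b) {p : ℝ} (hp : 1 ≤ p) :
    (a + b) ^ p ≤ (2 : ℝ) ^ (p - 1) * (a ^ p + b ^ p) := by
  lift a to NNReal using ha
  lift b to NNReal using hb
  have h := NNReal.rpow_add_le_mul_rpow_add_rpow a b hp
  exact_mod_cast h

/-- For fixed `q ∈ D` with Lipschitz continuously invertible `A(q,·)`, the reduced
residual is controlled by the all-at-once residual:
`‖𝒞(S q) − 𝒞(S q†)‖^p ≤ 2^{p−1}(‖𝒞(u−u†)‖^p + ‖𝒞‖^p L^p ‖A(q,u)‖^p)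
 ≤ C̄·‖𝔽(q,u) − 𝔽(q†,u†)‖^p` with `C̄ = 2^{p−1} max{1, ‖𝒞‖^p L^p}`. -/
theorem stmt_3 {Q V W Z : Type*}
    [NormedAddCommGroup Q] [NormedSpace ℝ Q]
    [NormedAddCommGroup V] [NormedSpace ℝ V]
    [NormedAddCommGroup W] [NormedSpace ℝ W]
    [NormedAddCommGroup Z] [NormedSpace ℝ Z]
    (D : Set Q) (A : Q → V → W) (obs : V →L[ℝ] Z) (S : Q → V)
    (hS : ∀ q' ∈ D, A q' (S q') = 0)
    (p : ℝ) (hp : 1 ≤ p)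
    (qd : Q) (hqd : qd ∈ D)
    (q : Q) (hq : q ∈ D)
    (L : ℝ) (hL : 0 < L)
    (hLip : ∀ u₁ u₂ : V, ‖u₁ - u₂‖ ≤ L * ‖A q u₁ - A q u₂‖) :
    ∀ u : V,
      ‖obs (S q) - obs (S qd)‖ ^ p ≤
        (2 : ℝ) ^ (p - 1) * (‖obs (u - S qd)‖ ^ p + ‖obs‖ ^ p * L ^ p * ‖A q u‖ ^ p) ∧
      (2 : ℝ) ^ (p - 1) * (‖obs (u - S qd)‖ ^ p + ‖obs‖ ^ p * L ^ p * ‖A q u‖ ^ p) ≤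
        (2 : ℝ) ^ (p - 1) * max 1 (‖obs‖ ^ p * L ^ p) *
          (‖A q u - A qd (S qd)‖ ^ p + ‖obs u - obs (S qd)‖ ^ p) := by
  intro u
  have hp0 : 0 < p := lt_of_lt_of_le one_pos hp
  have hSq : A q (S q) = 0 := hS q hq
  have hSqd : A qd (S qd) = 0 := hS qd hqd
  constructor
  · -- first inequality
    have h1 : ‖obs (S q) - obs (S qd)‖ ≤ ‖obs (u - S qd)‖ + ‖obs‖ * L * ‖A q u‖ := by
      have h2 : obs (S q) - obs (S qd) = obs (u - S qd) + obs (S q - u) := by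
        rw [map_sub, map_sub]; abel
      calc ‖obs (S q) - obs (S qd)‖ ≤ ‖obs (u - S qd)‖ + ‖obs (S q - u)‖ := by
            rw [h2]; exact norm_add_le _ _
        _ ≤ ‖obs (u - S qd)‖ + ‖obs‖ * L * ‖A q u‖ := by
            gcongr
            calc ‖obs (S q - u)‖ ≤ ‖obs‖ * ‖S q - u‖ := obs.le_opNorm _
              _ ≤ ‖obs‖ * (L * ‖A q (S q) - A q u‖) := by
                  gcongr
                  exact hLip _ _
              _ = ‖obs‖ * L * ‖A q u‖ := by rw [hSq, zero_sub, norm_neg, mul_assoc]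
    calc ‖obs (S q) - obs (S qd)‖ ^ p
        ≤ (‖obs (u - S qd)‖ + ‖obs‖ * L * ‖A q u‖) ^ p := by
          apply Real.rpow_le_rpow (norm_nonneg _) h1 hp0.le
      _ ≤ (2 : ℝ) ^ (p - 1) * (‖obs (u - S qd)‖ ^ p + (‖obs‖ * L * ‖A q u‖) ^ p) := by
          apply aux_add_rpow (norm_nonneg _) (by positivity) hp
      _ = (2 : ℝ) ^ (p - 1) * (‖obs (u - S qd)‖ ^ p + ‖obs‖ ^ p * L ^ p * ‖A q u‖ ^ p) := by
          rw [Real.mul_rpow (by positivity) (norm_nonneg _),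
            Real.mul_rpow (norm_nonneg _) hL.le]
  · -- second inequality
    rw [hSqd, sub_zero]
    have hobsu : obs u - obs (S qd) = obs (u - S qd) := (map_sub obs u (S qd)).symm
    rw [hobsu, mul_assoc ((2:ℝ) ^ (p - 1))]
    apply mul_le_mul_of_nonneg_left _ (by positivity)
    have h1 : (1 : ℝ) ≤ max 1 (‖obs‖ ^ p * L ^ p) := le_max_left _ _
    have h2 : ‖obs‖ ^ p * L ^ p ≤ max 1 (‖obs‖ ^ p * L ^ p) := le_max_right _ _
    calc ‖obs (u - S qd)‖ ^ p + ‖obs‖ ^ p * L ^ p * ‖A q u‖ ^ p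
        ≤ max 1 (‖obs‖ ^ p * L ^ p) * ‖obs (u - S qd)‖ ^ p +
          max 1 (‖obs‖ ^ p * L ^ p) * ‖A q u‖ ^ p := by
          gcongr
          · nlinarith [Real.rpow_nonneg (norm_nonneg (obs (u - S qd))) p, h1]
      _ = max 1 (‖obs‖ ^ p * L ^ p) * (‖A q u‖ ^ p + ‖obs (u - S qd)‖ ^ p) := by ring
end

section
/- In Setting (V), let R(r̂) := Ř((I−P)(r⁻¹(r̂))) for r̂ ∈ X̃, assume ‖P(r⁻¹(r̂₁)) − P(r⁻¹(r̂₂))‖ ≤ C_Q·Q(r̂₁, r̂₂) for all r̂₁, r̂₂ ∈ X̃, fix α, β > 0 and η ≥ 0 with η ≤ C_η·δ^p, and let (r̂, x) ∈ X̃ × U satisfy J(r̂, x) ≤ J(r(x†), x†) + η, where J(r̂, x) := ‖K r̂ + F(x₀) − y^δ‖^p + α·R(r̂) + β·Q(r(x), r̂)^p + ‖P(x)‖^p. Then, with err := (1−b)·Δ_ξ((I−P)(r⁻¹(r̂)), x†), res := 2^{1−p}·‖K(r̂ − r(x†))‖^p + β·Q(r(x), r̂)^p + ‖P(x)‖^p,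 and C̄ := 2^{2p−2}·max{1, ‖K‖^p·L_r^p, ‖K‖^p·L_r^p·C_Q^p/β}, the inequality res + α·err ≤ (2 + C_η)·δ^p + α·ψ(C̄·res) holds. -/
private lemma aux_add_rpow_s5 {x y p : ℝ} (hx : 0 ≤ x) (hy : 0 ≤ y) (hp : 1 ≤ p) :
    (x + y) ^ p ≤ (2 : ℝ) ^ (p - 1) * (x ^ p + y ^ p) := by
  have h := NNReal.rpow_add_le_mul_rpow_add_rpow x.toNNReal y.toNNReal hp
  have h2 := NNReal.coe_le_coe.mpr h
  push_cast at h2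
  rwa [Real.coe_toNNReal x hx, Real.coe_toNNReal y hy] at h2

set_option maxHeartbeats 2000000 in
/-- The central minimality estimate for variational regularization: with
`err = (1−b)·Δ_ξ((I−P)(r⁻¹(r̂)), x†)` and
`res = 2^{1−p}‖K(r̂−r(x†))‖^p + β·Q(r(x),r̂)^p + ‖P(x)‖^p`, an `η`-minimizer
comparison with `(r(x†), x†)` yields `res + α·err ≤ (2+C_η)δ^p + α·ψ(C̄·res)`. -/
theorem stmt_5
    (p : ℝ) (hp : 1 ≤ p) (b : ℝ) (hb0 : 0 < b) (hb1 : b < 1)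
    {X Xt Y : Type*} [NormedAddCommGroup X] [NormedSpace ℝ X]
    [NormedAddCommGroup Xt] [NormedSpace ℝ Xt]
    [NormedAddCommGroup Y] [NormedSpace ℝ Y]
    (Xc : Submodule ℝ X) (U : Set X) (x0 xd : X)
    (hx0U : x0 ∈ U) (hx0c : x0 ∈ Xc) (hxdU : xd ∈ U) (hxdc : xd ∈ Xc)
    (F : X → Y) (K : Xt →L[ℝ] Y)
    (r : X → Xt) (rinv : Xt → X)
    (hrleft : ∀ x ∈ U, rinv (r x) = x)
    (hrmem : ∀ v : Xt, rinv v ∈ U) (hrright : ∀ v : Xt, r (rinv v) = v)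
    (Lr : ℝ) (hLr : ∀ x1 ∈ U, ∀ x2 ∈ U, ‖r x1 - r x2‖ ≤ Lr * ‖x1 - x2‖)
    (hRI : ∀ x ∈ U, F x - F x0 = K (r x))
    (P Ip : X → X) (hPIp : ∀ x, P x = x - Ip x)
    (hIpXc : ∀ x, Ip x ∈ Xc)
    (hPxd : P xd = 0) (hPx0 : P x0 = 0)
    (hIprinvU : ∀ v : Xt, Ip (rinv v) ∈ U)
    (δ : ℝ) (hδ : 0 < δ) (yδ : Y) (hnoise : ‖F xd - yδ‖ ≤ δ)
    (Rc : X → ℝ) (hRcnn : ∀ x, 0 ≤ Rc x)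
    (ξ : X →L[ℝ] ℝ) (hξ : ∀ xc ∈ Xc, ξ (xc - xd) ≤ Rc xc - Rc xd)
    (ψ : ℝ → ℝ) (hψcont : ContinuousOn ψ (Set.Ici (0 : ℝ)))
    (hψmono : MonotoneOn ψ (Set.Ici (0 : ℝ)))
    (hψ0 : ψ 0 = 0) (hψnn : ∀ t : ℝ, 0 ≤ t → 0 ≤ ψ t)
    (hVSC : ∀ xc, xc ∈ Xc → xc ∈ U →
      -(ξ (xc - xd)) ≤ b * (Rc xc - Rc xd - ξ (xc - xd)) + ψ (‖K (r xc - r xd)‖ ^ p))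
    (Q : Xt → Xt → ℝ) (hQnn : ∀ v1 v2, 0 ≤ Q v1 v2) (hQdiag : ∀ v, Q v v = 0)
    (CQ : ℝ) (hCQ : ∀ v1 v2 : Xt, ‖P (rinv v1) - P (rinv v2)‖ ≤ CQ * Q v1 v2)
    (α β : ℝ) (hα : 0 < α) (hβ : 0 < β)
    (Cη η : ℝ) (hCη : 0 < Cη) (hη0 : 0 ≤ η) (hη : η ≤ Cη * δ ^ p)
    (Cb : ℝ)
    (hCb : Cb = (2 : ℝ) ^ (2 * p - 2) *
      max (max 1 (‖K‖ ^ p * Lr ^ p)) (‖K‖ ^ p * Lr ^ p * CQ ^ p / β))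
    (J : Xt → X → ℝ)
    (hJ : ∀ v x, J v x =
      ‖K v + F x0 - yδ‖ ^ p + α * Rc (Ip (rinv v)) + β * Q (r x) v ^ p + ‖P x‖ ^ p)
    (rh : Xt) (xh : X) (hxhU : xh ∈ U)
    (hmin : J rh xh ≤ J (r xd) xd + η)
    (err res : ℝ)
    (herr : err = (1 - b) * (Rc (Ip (rinv rh)) - Rc xd - ξ (Ip (rinv rh) - xd)))
    (hres : res = (2 : ℝ) ^ (1 - p) * ‖K (rh - r xd)‖ ^ p + β * Q (r xh) rh ^ p + ‖P xh‖ ^ p) :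
    res + α * err ≤ (2 + Cη) * δ ^ p + α * ψ (Cb * res) := by
  have hp0 : (0:ℝ) < p := lt_of_lt_of_le one_pos hp
  have hpne : p ≠ 0 := ne_of_gt hp0
  set xhat := Ip (rinv rh) with hxhatdef
  have hxhatU : xhat ∈ U := hIprinvU rh
  have hxhatc : xhat ∈ Xc := hIpXc _
  have hIpxd : Ip xd = xd := by
    have h := hPIp xd; rw [hPxd] at h
    exact (sub_eq_zero.mp h.symm).symm
  -- abbreviations
  set N1 := ‖K rh + F x0 - yδ‖ with hN1
  set N2 := ‖F xd - yδ‖ with hN2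
  set a := ‖K (rh - r xd)‖ with ha
  set q := Q (r xh) rh with hq
  set w := ‖P xh‖ with hw
  set T := ‖K (r xhat - r xd)‖ ^ p with hT
  have hN1nn : 0 ≤ N1 := norm_nonneg _
  have hN2nn : 0 ≤ N2 := norm_nonneg _
  have hann : 0 ≤ a := norm_nonneg _
  have hqnn : 0 ≤ q := hQnn _ _
  have hwnn : 0 ≤ w := norm_nonneg _
  have hTnn : 0 ≤ T := Real.rpow_nonneg (norm_nonneg _) p
  have hapnn : 0 ≤ a ^ p := Real.rpow_nonneg hann p
  have hqpnn : 0 ≤ q ^ p := Real.rpow_nonneg hqnn p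
  have hwpnn : 0 ≤ w ^ p := Real.rpow_nonneg hwnn p
  have hN1pnn : 0 ≤ N1 ^ p := Real.rpow_nonneg hN1nn p
  have h2p1 : (0:ℝ) < (2:ℝ) ^ (p - 1) := Real.rpow_pos_of_pos two_pos _
  have h21p : (0:ℝ) < (2:ℝ) ^ (1 - p) := Real.rpow_pos_of_pos two_pos _
  have h22p : (0:ℝ) < (2:ℝ) ^ (2*p - 2) := Real.rpow_pos_of_pos two_pos _
  -- value of J at the reference point
  have hJd : J (r xd) xd = N2 ^ p + α * Rc xd := by
    rw [hJ, hrleft xd hxdU, hIpxd, hQdiag, hPxd, hN2]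
    have hK : K (r xd) + F x0 - yδ = F xd - yδ := by
      rw [← hRI xd hxdU]; abel
    rw [hK, Real.zero_rpow hpne, norm_zero, Real.zero_rpow hpne]
    ring
  -- J at the minimizer
  have hJh : J rh xh = N1 ^ p + α * Rc xhat + β * q ^ p + w ^ p := by
    rw [hJ]
  have hN2δ : N2 ^ p ≤ δ ^ p := Real.rpow_le_rpow hN2nn hnoise hp0.le
  have hmin' : N1 ^ p + α * Rc xhat + β * q ^ p + w ^ p ≤ δ ^ p + α * Rc xd + η := by
    rw [← hJh]
    calc J rh xh ≤ J (r xd) xd + η := hmin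
      _ = N2 ^ p + α * Rc xd + η := by rw [hJd]
      _ ≤ δ ^ p + α * Rc xd + η := by linarith only [hN2δ]
  -- VSC consequence
  have hVh := hVSC xhat hxhatc hxhatU
  have herrle : err ≤ Rc xhat - Rc xd + ψ T := by
    have hx : (1 - b) * (Rc xhat - Rc xd - (ξ (xhat - xd)))
        = (Rc xhat - Rc xd - (ξ (xhat - xd)))
          - b * (Rc xhat - Rc xd - (ξ (xhat - xd))) := by ring
    rw [← hT] at hVh
    rw [herr, hx]
    linarith only [hVh]
  -- residual bound: 2^(1-p) a^p ≤ N1^p + δ^p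
  have haN : a ≤ N1 + N2 := by
    have hK : K (rh - r xd) = (K rh + F x0 - yδ) - (F xd - yδ) := by
      rw [map_sub, ← hRI xd hxdU]; abel
    rw [ha, hK]
    exact norm_sub_le _ _
  have hap : a ^ p ≤ (2:ℝ) ^ (p-1) * (N1 ^ p + N2 ^ p) := by
    calc a ^ p ≤ (N1 + N2) ^ p := Real.rpow_le_rpow hann haN hp0.le
      _ ≤ (2:ℝ) ^ (p-1) * (N1 ^ p + N2 ^ p) := aux_add_rpow_s5 hN1nn hN2nn hp
  have hcancel : (2:ℝ) ^ (1-p) * (2:ℝ) ^ (p-1) = 1 := by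
    rw [← Real.rpow_add two_pos]; norm_num
  have hresle : res ≤ N1 ^ p + δ ^ p + β * q ^ p + w ^ p := by
    rw [hres]
    have : (2:ℝ) ^ (1-p) * a ^ p ≤ N1 ^ p + N2 ^ p := by
      calc (2:ℝ) ^ (1-p) * a ^ p ≤ (2:ℝ) ^ (1-p) * ((2:ℝ) ^ (p-1) * (N1 ^ p + N2 ^ p)) :=
            by exact mul_le_mul_of_nonneg_left hap h21p.le
        _ = (N1 ^ p + N2 ^ p) := by rw [← mul_assoc, hcancel, one_mul]
    linarith only [hN2δ, this]
  -- key estimate: T ≤ Cb * res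
  have hCbmax1 : (2:ℝ) ^ (2*p-2) ≤ Cb := by
    have hM1 : (1:ℝ) ≤ max (max 1 (‖K‖ ^ p * Lr ^ p)) (‖K‖ ^ p * Lr ^ p * CQ ^ p / β) :=
      le_trans (le_max_left _ _) (le_max_left _ _)
    have h := mul_le_mul_of_nonneg_left hM1 h22p.le
    rw [hCb]; linarith only [h]
  have hCbnn : 0 ≤ Cb := le_trans h22p.le hCbmax1
  have h2p1ge1 : (1:ℝ) ≤ (2:ℝ) ^ (p-1) := by
    have := Real.one_le_rpow (by norm_num : (1:ℝ) ≤ 2) (by linarith : (0:ℝ) ≤ p - 1)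
    exact this
  have h22split : (2:ℝ) ^ (2*p-2) = (2:ℝ) ^ (p-1) * (2:ℝ) ^ (p-1) := by
    rw [← Real.rpow_add two_pos]; ring_nf
  -- decomposition ‖K (r xhat - r xd)‖ ≤ ‖K‖ * ‖r xhat - rh‖ + a
  have hsplit : ‖K (r xhat - r xd)‖ ≤ ‖K‖ * ‖r xhat - rh‖ + a := by
    have h1 : K (r xhat - r xd) = K (r xhat - rh) + K (rh - r xd) := by
      rw [← map_add]; congr 1; abel
    calc ‖K (r xhat - r xd)‖ = ‖K (r xhat - rh) + K (rh - r xd)‖ := by rw [h1]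
      _ ≤ ‖K (r xhat - rh)‖ + ‖K (rh - r xd)‖ := norm_add_le _ _
      _ ≤ ‖K‖ * ‖r xhat - rh‖ + a := by
          have hop := K.le_opNorm (r xhat - rh); rw [ha]; linarith only [hop]
  -- Lipschitz bound
  set t := ‖P (rinv rh)‖ with ht
  have htnn : 0 ≤ t := norm_nonneg _
  have hLip : ‖r xhat - rh‖ ≤ Lr * t := by
    have h1 := hLr xhat hxhatU (rinv rh) (hrmem rh)
    rw [hrright] at h1
    have h2 : xhat - rinv rh = -(P (rinv rh)) := by
      rw [hxhatdef, hPIp (rinv rh)]; abel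
    rw [h2, norm_neg] at h1
    exact h1
  have hPQ : ‖P xh - P (rinv rh)‖ ≤ CQ * q := by
    have := hCQ (r xh) rh
    rwa [hrleft xh hxhU] at this
  have hCQq0 : 0 ≤ CQ * q := le_trans (norm_nonneg _) hPQ
  have htwq : t ≤ w + CQ * q := by
    have h1 : t ≤ w + ‖P xh - P (rinv rh)‖ := by
      have := norm_sub_norm_le (P xh) (P (rinv rh))
      rw [ht, hw]
      have h2 := norm_add_le (P xh) (P (rinv rh) - P xh)
      simp only [add_sub_cancel] at h2
      calc ‖P (rinv rh)‖ ≤ ‖P xh‖ + ‖P (rinv rh) - P xh‖ := h2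
        _ = ‖P xh‖ + ‖P xh - P (rinv rh)‖ := by rw [norm_sub_rev]
    linarith only [h1, hPQ]
  have hKnn : (0:ℝ) ≤ ‖K‖ := norm_nonneg _
  have hTres : T ≤ Cb * res := by
    have hres' : res = (2:ℝ) ^ (1-p) * a ^ p + β * q ^ p + w ^ p := hres
    rcases lt_or_ge Lr 0 with hLrneg | hLrnn
    · -- Lr < 0 forces r xhat = rh
      have h0 : ‖r xhat - rh‖ = 0 := by
        have : Lr * t ≤ 0 := mul_nonpos_of_nonpos_of_nonneg hLrneg.le htnn
        have := le_trans hLip this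
        exact le_antisymm this (norm_nonneg _)
      have hTa : T ≤ a ^ p := by
        rw [hT]
        apply Real.rpow_le_rpow (norm_nonneg _) _ hp0.le
        calc ‖K (r xhat - r xd)‖ ≤ ‖K‖ * ‖r xhat - rh‖ + a := hsplit
          _ = a := by rw [h0]; ring
      have h2eq : (2:ℝ) ^ (2*p-2) * (2:ℝ) ^ (1-p) = (2:ℝ) ^ (p-1) := by
        rw [← Real.rpow_add two_pos]; congr 1; ring
      have h1 : (1:ℝ) ≤ Cb * (2:ℝ) ^ (1-p) := by
        have h2 := mul_le_mul_of_nonneg_right hCbmax1 h21p.le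
        rw [h2eq] at h2
        linarith only [h2, h2p1ge1]
      have hkey : a ^ p ≤ Cb * ((2:ℝ) ^ (1-p) * a ^ p) := by
        have h3 := mul_le_mul_of_nonneg_right h1 hapnn
        rw [one_mul, mul_assoc] at h3
        exact h3
      have hr1 : 0 ≤ Cb * (β * q ^ p) := mul_nonneg hCbnn (mul_nonneg hβ.le hqpnn)
      have hr2 : 0 ≤ Cb * w ^ p := mul_nonneg hCbnn hwpnn
      calc T ≤ a ^ p := hTa
        _ ≤ Cb * ((2:ℝ) ^ (1-p) * a ^ p) := hkey
        _ ≤ Cb * res := by rw [hres', mul_add, mul_add]; linarith only [hr1, hr2]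
    · -- Lr ≥ 0
      set u := ‖K‖ * Lr * w with hu
      set v := ‖K‖ * Lr * (CQ * q) with hv
      have hunn : 0 ≤ u := mul_nonneg (mul_nonneg hKnn hLrnn) hwnn
      have hvnn : 0 ≤ v := mul_nonneg (mul_nonneg hKnn hLrnn) hCQq0
      have hKbound : ‖K (r xhat - r xd)‖ ≤ a + (u + v) := by
        have h1 : ‖K‖ * ‖r xhat - rh‖ ≤ ‖K‖ * (Lr * t) :=
          mul_le_mul_of_nonneg_left hLip hKnn
        have h2 : ‖K‖ * (Lr * t) ≤ ‖K‖ * (Lr * (w + CQ * q)) := by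
          apply mul_le_mul_of_nonneg_left _ hKnn
          exact mul_le_mul_of_nonneg_left htwq hLrnn
        have h3 : ‖K‖ * (Lr * (w + CQ * q)) = u + v := by rw [hu, hv]; ring
        linarith only [hsplit, h1, h2, h3]
      have hT1 : T ≤ (2:ℝ) ^ (p-1) * a ^ p + (2:ℝ) ^ (2*p-2) * (u ^ p + v ^ p) := by
        have hstep1 : T ≤ (a + (u + v)) ^ p :=
          Real.rpow_le_rpow (norm_nonneg _) hKbound hp0.le
        have hstep2 : (a + (u + v)) ^ p ≤ (2:ℝ)^(p-1) * (a ^ p + (u + v) ^ p) :=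
          aux_add_rpow_s5 hann (by linarith only [hunn, hvnn]) hp
        have hstep3 : (u + v) ^ p ≤ (2:ℝ)^(p-1) * (u ^ p + v ^ p) :=
          aux_add_rpow_s5 hunn hvnn hp
        have hupnn : 0 ≤ u ^ p := Real.rpow_nonneg hunn p
        have hvpnn : 0 ≤ v ^ p := Real.rpow_nonneg hvnn p
        calc T ≤ (2:ℝ)^(p-1) * (a ^ p + (u + v) ^ p) := le_trans hstep1 hstep2
          _ ≤ (2:ℝ)^(p-1) * (a ^ p + (2:ℝ)^(p-1) * (u ^ p + v ^ p)) := by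
              have h5 := mul_le_mul_of_nonneg_left hstep3 h2p1.le
              rw [mul_add, mul_add]
              linarith only [h5]
          _ = (2:ℝ)^(p-1) * a ^ p + (2:ℝ)^(2*p-2) * (u ^ p + v ^ p) := by
              rw [h22split]; ring
      have hup : u ^ p = ‖K‖ ^ p * Lr ^ p * w ^ p := by
        rw [hu, Real.mul_rpow (mul_nonneg hKnn hLrnn) hwnn, Real.mul_rpow hKnn hLrnn]
      -- three coefficient bounds
      have hc1 : (2:ℝ)^(p-1) * a ^ p ≤ Cb * ((2:ℝ)^(1-p) * a ^ p) := by
        have h2eq : (2:ℝ) ^ (2*p-2) * (2:ℝ) ^ (1-p) = (2:ℝ) ^ (p-1) := by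
          rw [← Real.rpow_add two_pos]; congr 1; ring
        have h6 : (2:ℝ)^(p-1) ≤ Cb * (2:ℝ)^(1-p) := by
          have h7 := mul_le_mul_of_nonneg_right hCbmax1 h21p.le
          rw [h2eq] at h7
          exact h7
        have h8 := mul_le_mul_of_nonneg_right h6 hapnn
        rw [mul_assoc] at h8
        exact h8
      have hc2 : (2:ℝ)^(2*p-2) * u ^ p ≤ Cb * w ^ p := by
        rw [hup]
        have hK2 : ‖K‖ ^ p * Lr ^ p ≤ max (max 1 (‖K‖ ^ p * Lr ^ p)) (‖K‖ ^ p * Lr ^ p * CQ ^ p / β) :=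
          le_max_of_le_left (le_max_right _ _)
        have h9 : (2:ℝ)^(2*p-2) * (‖K‖ ^ p * Lr ^ p) ≤ Cb := by
          rw [hCb]; exact mul_le_mul_of_nonneg_left hK2 h22p.le
        have h10 := mul_le_mul_of_nonneg_right h9 hwpnn
        rw [mul_assoc] at h10
        exact h10
      have hc3 : (2:ℝ)^(2*p-2) * v ^ p ≤ Cb * (β * q ^ p) := by
        rcases lt_or_ge CQ 0 with hCQneg | hCQnn
        · -- CQ < 0 forces q = 0 hence v = 0
          have hq0 : q = 0 := by
            by_contra hne
            have hqpos : 0 < q := lt_of_le_of_ne hqnn (Ne.symm hne)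
            exact absurd hCQq0 (not_le.mpr (mul_neg_of_neg_of_pos hCQneg hqpos))
          have hv0 : v = 0 := by rw [hv, hq0]; ring
          rw [hv0, Real.zero_rpow hpne, hq0, Real.zero_rpow hpne]
          simp
        · have hvp : v ^ p = ‖K‖ ^ p * Lr ^ p * CQ ^ p * q ^ p := by
            rw [hv, Real.mul_rpow (mul_nonneg hKnn hLrnn) hCQq0,
              Real.mul_rpow hKnn hLrnn, Real.mul_rpow hCQnn hqnn]
            ring
          rw [hvp]
          have hK3 : ‖K‖ ^ p * Lr ^ p * CQ ^ p / β ≤ max (max 1 (‖K‖ ^ p * Lr ^ p)) (‖K‖ ^ p * Lr ^ p * CQ ^ p / β) :=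
            le_max_right _ _
          have hcoef : (2:ℝ)^(2*p-2) * (‖K‖ ^ p * Lr ^ p * CQ ^ p) ≤ Cb * β := by
            have h1 : (2:ℝ)^(2*p-2) * (‖K‖ ^ p * Lr ^ p * CQ ^ p / β) ≤ Cb := by
              rw [hCb]; exact mul_le_mul_of_nonneg_left hK3 h22p.le
            have h2 := mul_le_mul_of_nonneg_right h1 hβ.le
            calc (2:ℝ)^(2*p-2) * (‖K‖ ^ p * Lr ^ p * CQ ^ p)
                = (2:ℝ)^(2*p-2) * (‖K‖ ^ p * Lr ^ p * CQ ^ p / β) * β := by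
                  field_simp
              _ ≤ Cb * β := h2
          have h4 := mul_le_mul_of_nonneg_right hcoef hqpnn
          calc (2:ℝ)^(2*p-2) * (‖K‖ ^ p * Lr ^ p * CQ ^ p * q ^ p)
              = (2:ℝ)^(2*p-2) * (‖K‖ ^ p * Lr ^ p * CQ ^ p) * q ^ p := by ring
            _ ≤ Cb * β * q ^ p := h4
            _ = Cb * (β * q ^ p) := by ring
      have hd : (2:ℝ)^(2*p-2) * (u ^ p + v ^ p)
          = (2:ℝ)^(2*p-2) * u ^ p + (2:ℝ)^(2*p-2) * v ^ p := by ring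
      rw [hres', mul_add, mul_add]
      linarith only [hT1, hc1, hc2, hc3, hd]
  -- monotonicity of ψ
  have hψTle : ψ T ≤ ψ (Cb * res) := by
    have hresnn : 0 ≤ res := by
      rw [hres]
      have ha1 := mul_nonneg h21p.le hapnn
      have ha2 := mul_nonneg hβ.le hqpnn
      linarith only [ha1, ha2, hwpnn]
    exact hψmono (Set.mem_Ici.mpr hTnn) (Set.mem_Ici.mpr (mul_nonneg hCbnn hresnn)) hTres
  -- combine everything
  have hfinal : res + α * err ≤ 2 * δ ^ p + η + α * ψ T := by
    have h1 : α * err ≤ α * (Rc xhat - Rc xd + ψ T) :=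
      mul_le_mul_of_nonneg_left herrle hα.le
    linarith only [hresle, hmin', h1]
  calc res + α * err ≤ 2 * δ ^ p + η + α * ψ T := hfinal
    _ ≤ 2 * δ ^ p + Cη * δ ^ p + α * ψ T := by linarith only [hη]
    _ ≤ (2 + Cη) * δ ^ p + α * ψ (Cb * res) := by
        have hm := mul_le_mul_of_nonneg_left hψTle hα.le
        linarith only [hm]
end

section
/- In Setting (V), assume additionally: ψ(a+b) ≤ C_ψ·(ψ(a) + ψ(b)) for all a, b ≥ 0 with C_ψ ≥ 1; R(r̂) := Ř((I−P)(r⁻¹(r̂))) + R_P(P(r⁻¹(r̂))) with R_P(0) = 0 and R_P(v) ≥ γ·ψ(C_P·‖v‖^p) for all v, where γ > C_ψ and C_P ≥ 2^{p−1}·‖K‖^p·L_r^p; and Q(r(x†), r̂)^p ≤ C̃_Q·(Δ_ξ((I−P)(r⁻¹(r̂)), x†) + ψ(C_P·‖P(r⁻¹(r̂))‖^p)) for all r̂ ∈ X̃. Fix α, β > 0 and η ≥ 0 with η ≤ C_η·δ^p, and let (r̂_sm, x_sm) ∈ X̃ × U satisfy J_α(r̂_sm) ≤ J_α(r(x†))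 + η and J_β(r̂_sm, x_sm) ≤ J_β(r̂_sm, x†) + η, where J_α(r̂) := ‖K r̂ + F(x₀) − y^δ‖^p + α·R(r̂) and J_β(r̂, x) := β·Q(r(x), r̂)^p + ‖P(x)‖^p. Then, with c̲ := min{1−b, γ−C_ψ}/(2C̃_Q), err := (min{1−b, γ−C_ψ}/(2C_ψ))·(Δ_ξ((I−P)(r⁻¹(r̂_sm)), x†) + ψ(C_P·‖P(r⁻¹(r̂_sm))‖^p)) + (c̲/C_ψ)·(Q(r(x_sm), r̂_sm)^p + (1/β)·‖P(x_sm)‖^p), res := (2^{1−p}/C_ψ)·‖K(r̂_sm − r(x†))‖^p, and C̄ := 2^{2p−2}·C_ψ, the inequality res + α·err ≤ ((2 + C_η + (α/β)·c̲·C_η)/C_ψ)·δ^p + α·ψ(C̄·res) holds. -/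
/-! Comparing the first-stage minimiser `r̂` with `r x†` in `J_α` bounds the data misfit plus
`α` times the penalty gap by `δ^p + η`. The variational source condition at
`x̌ = (I - P) (r⁻¹ r̂)` controls `-⟨ξ, x̌ - x†⟩` by `ψ (‖K (r x̌ - r x†)‖^p)`. Splitting
`r x̌ - r x† = (r x̌ - r̂) + (r̂ - r x†)`, the Lipschitz bound on `r` turns the first part into
`ψ (C_P ‖P (r⁻¹ r̂)‖^p)`, which the lower bound on `R_P` absorbs since `γ > C_ψ`, and the second
part is the residual `res`. Comparing the second-stage minimiser with `x†` in `J_β` and using the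
bound on `Q` yields the remaining terms of `err`. -/

open Set

lemma Real.rpow_add_le_mul_rpow_add_rpow {p a b : ℝ} (ha : 0 ≤ a) (hb : 0 ≤ b) (hp : 1 ≤ p) :
    (a + b) ^ p ≤ 2 ^ (p - 1) * (a ^ p + b ^ p) := by
  lift a to NNReal using ha
  lift b to NNReal using hb
  exact_mod_cast NNReal.rpow_add_le_mul_rpow_add_rpow a b hp

section Norm

variable {E : Type*} [SeminormedAddCommGroup E] {p : ℝ}

lemma norm_add_rpow_le (hp : 1 ≤ p) (a b : E) :
    ‖a + b‖ ^ p ≤ 2 ^ (p - 1) * (‖a‖ ^ p + ‖b‖ ^ p) :=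
  (Real.rpow_le_rpow (norm_nonneg _) (norm_add_le a b) (by linarith)).trans
    (Real.rpow_add_le_mul_rpow_add_rpow (norm_nonneg a) (norm_nonneg b) hp)

lemma two_rpow_mul_norm_sub_rpow_le (hp : 1 ≤ p) (a : E) {b : E} {δ : ℝ} (hb : ‖b‖ ≤ δ) :
    2 ^ (1 - p) * ‖a - b‖ ^ p ≤ ‖a‖ ^ p + δ ^ p := by
  have hδ : ‖b‖ ^ p ≤ δ ^ p := Real.rpow_le_rpow (norm_nonneg b) hb (by linarith)
  have h := norm_add_rpow_le hp a (-b)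
  rw [norm_neg, ← sub_eq_add_neg] at h
  calc 2 ^ (1 - p) * ‖a - b‖ ^ p
      ≤ 2 ^ (1 - p) * (2 ^ (p - 1) * (‖a‖ ^ p + δ ^ p)) := by gcongr; exact h.trans (by gcongr)
    _ = ‖a‖ ^ p + δ ^ p := by
      rw [← mul_assoc, ← Real.rpow_add two_pos]; norm_num

end Norm

lemma subsingleton_of_lipschitz_neg {X Y : Type*} [SeminormedAddCommGroup X]
    [NormedAddCommGroup Y] {r : X → Y} {U : Set X} (hsurj : SurjOn r U univ) {L : ℝ}
    (hL : ∀ x₁ ∈ U, ∀ x₂ ∈ U, ‖r x₁ - r x₂‖ ≤ L * ‖x₁ - x₂‖) (hL0 : L < 0) :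
    Subsingleton Y := by
  refine ⟨fun y₁ y₂ => ?_⟩
  obtain ⟨x₁, hx₁, rfl⟩ := hsurj (mem_univ y₁)
  obtain ⟨x₂, hx₂, rfl⟩ := hsurj (mem_univ y₂)
  have h := hL x₁ hx₁ x₂ hx₂
  have : L * ‖x₁ - x₂‖ ≤ 0 := mul_nonpos_of_nonpos_of_nonneg hL0.le (norm_nonneg _)
  exact sub_eq_zero.mp (norm_le_zero_iff.mp (h.trans this))

section Operator

variable {X Y : Type*} [NormedAddCommGroup X] [NormedSpace ℝ X]
  [NormedAddCommGroup Y] [NormedSpace ℝ Y] {p : ℝ}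

lemma two_rpow_mul_opNorm_rpow_mul_max_le {Z : Type*} [SeminormedAddCommGroup Z]
    {r : Z → X} {U : Set Z} (hsurj : SurjOn r U univ) {L : ℝ}
    (hL : ∀ x₁ ∈ U, ∀ x₂ ∈ U, ‖r x₁ - r x₂‖ ≤ L * ‖x₁ - x₂‖) (hp : 0 < p)
    (K : X →L[ℝ] Y) {C : ℝ} (hC : 2 ^ (p - 1) * ‖K‖ ^ p * L ^ p ≤ C) :
    2 ^ (p - 1) * ‖K‖ ^ p * max L 0 ^ p ≤ C := by
  rcases le_or_gt 0 L with hL0 | hL0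
  · rwa [max_eq_left hL0]
  · -- `L ^ p` is a junk value here, but `X` is trivial, so `‖K‖ = 0`.
    have := subsingleton_of_lipschitz_neg hsurj hL hL0
    simp only [K.opNorm_subsingleton, max_eq_right hL0.le, Real.zero_rpow hp.ne', mul_zero,
      zero_mul] at hC ⊢
    exact hC

lemma rpow_norm_map_sub_le (hp : 1 ≤ p) (K : X →L[ℝ] Y) {u w z : X} {L s C : ℝ}
    (hL : 0 ≤ L) (hs : 0 ≤ s) (huw : ‖u - w‖ ≤ L * s)
    (hC : 2 ^ (p - 1) * ‖K‖ ^ p * L ^ p ≤ C) :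
    ‖K (u - z)‖ ^ p ≤ C * s ^ p + 2 ^ (p - 1) * ‖K (w - z)‖ ^ p := by
  have hKuw : ‖K (u - w)‖ ^ p ≤ ‖K‖ ^ p * L ^ p * s ^ p := by
    rw [← Real.mul_rpow (norm_nonneg K) hL, ← Real.mul_rpow (by positivity) hs, mul_assoc]
    exact Real.rpow_le_rpow (norm_nonneg _)
      ((K.le_opNorm _).trans (by gcongr)) (by linarith)
  have hKuw' : 2 ^ (p - 1) * ‖K (u - w)‖ ^ p ≤ C * s ^ p :=
    calc 2 ^ (p - 1) * ‖K (u - w)‖ ^ p ≤ 2 ^ (p - 1) * (‖K‖ ^ p * L ^ p * s ^ p) := by gcongr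
      _ = 2 ^ (p - 1) * ‖K‖ ^ p * L ^ p * s ^ p := by ring
      _ ≤ C * s ^ p := by gcongr
  have hsplit := norm_add_rpow_le hp (K (u - w)) (K (w - z))
  rw [← map_add, sub_add_sub_cancel] at hsplit
  linarith

lemma MonotoneOn.apply_rpow_norm_map_sub_le {ψ : ℝ → ℝ} (hψ : MonotoneOn ψ (Ici 0)) {Cψ : ℝ}
    (hsub : ∀ a c : ℝ, 0 ≤ a → 0 ≤ c → ψ (a + c) ≤ Cψ * (ψ a + ψ c)) (hp : 1 ≤ p)
    (K : X →L[ℝ] Y) {u w z : X} {L s C : ℝ} (hL : 0 ≤ L) (hs : 0 ≤ s) (huw : ‖u - w‖ ≤ L * s)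
    (hC : 2 ^ (p - 1) * ‖K‖ ^ p * L ^ p ≤ C) :
    ψ (‖K (u - z)‖ ^ p) ≤ Cψ * (ψ (C * s ^ p) + ψ (2 ^ (p - 1) * ‖K (w - z)‖ ^ p)) := by
  have hCs : 0 ≤ C * s ^ p := mul_nonneg (le_trans (by positivity) hC) (by positivity)
  have hw : 0 ≤ (2 : ℝ) ^ (p - 1) * ‖K (w - z)‖ ^ p := by positivity
  exact (hψ (Real.rpow_nonneg (norm_nonneg _) _) (add_nonneg hCs hw)
    (rpow_norm_map_sub_le hp K hL hs huw hC)).trans (hsub _ _ hCs hw)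

end Operator

lemma min_mul_add_le_mul_add_mul {a c s t : ℝ} (hs : 0 ≤ s) (ht : 0 ≤ t) :
    min a c * (s + t) ≤ a * s + c * t := by
  rw [mul_add]
  gcongr
  exacts [min_le_left a c, min_le_right a c]

lemma add_mul_le_of_stage_estimates {Cψ CtQ α β Cη m cl res err D E q d η ψc : ℝ}
    (hCψ : 0 < Cψ) (hCtQ : 0 < CtQ) (hα : 0 ≤ α) (hβ : 0 < β) (hm : 0 ≤ m)
    (hcl : cl = m / (2 * CtQ)) (herr : err = m / (2 * Cψ) * E + cl / Cψ * q)
    (hres : Cψ * res ≤ D + d) (hfirst : D + α * (m * E) ≤ d + η + α * (Cψ * ψc))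
    (hsecond : q ≤ CtQ * E + η / β) (hη : η ≤ Cη * d) :
    res + α * err ≤ ((2 + Cη + α / β * cl * Cη) / Cψ) * d + α * ψc := by
  have hcl0 : 0 ≤ cl := by rw [hcl]; positivity
  have hCerr : Cψ * err ≤ m * E + cl / β * η :=
    calc Cψ * err = m / 2 * E + cl * q := by rw [herr]; field_simp
      _ ≤ m / 2 * E + cl * (CtQ * E + η / β) := by gcongr
      _ = m * E + cl / β * η := by rw [hcl]; field_simp; ring
  have hη' : α * (cl / β * η) ≤ α * (cl / β * (Cη * d)) := by gcongr
  have key : Cψ * (res + α * err) ≤ (2 + Cη + α / β * cl * Cη) * d + Cψ * (α * ψc) := by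
    linear_combination hres + hfirst + mul_le_mul_of_nonneg_left hCerr hα + hη' + hη
  calc res + α * err = Cψ * (res + α * err) / Cψ := by field_simp
    _ ≤ ((2 + Cη + α / β * cl * Cη) * d + Cψ * (α * ψc)) / Cψ := by gcongr
    _ = _ := by field_simp

theorem stmt_8_general
    (p : ℝ) (hp : 1 ≤ p) (b : ℝ) (hb1 : b < 1)
    {X Xt Y : Type*} [NormedAddCommGroup X] [NormedSpace ℝ X]
    [NormedAddCommGroup Xt] [NormedSpace ℝ Xt]
    [NormedAddCommGroup Y] [NormedSpace ℝ Y]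
    (Xc : Submodule ℝ X) (U : Set X) (x0 xd : X)
    (hxdU : xd ∈ U)
    (F : X → Y) (K : Xt →L[ℝ] Y)
    (r : X → Xt) (rinv : Xt → X)
    (hrleft : ∀ x ∈ U, rinv (r x) = x)
    (hrmem : ∀ v : Xt, rinv v ∈ U) (hrright : ∀ v : Xt, r (rinv v) = v)
    (Lr : ℝ) (hLr : ∀ x1 ∈ U, ∀ x2 ∈ U, ‖r x1 - r x2‖ ≤ Lr * ‖x1 - x2‖)
    (hRI : ∀ x ∈ U, F x - F x0 = K (r x))
    (P Ip : X → X) (hPIp : ∀ x, P x = x - Ip x)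
    (hIpXc : ∀ x, Ip x ∈ Xc)
    (hPxd : P xd = 0)
    (hIprinvU : ∀ v : Xt, Ip (rinv v) ∈ U)
    (δ : ℝ) (yδ : Y) (hnoise : ‖F xd - yδ‖ ≤ δ)
    (Rc : X → ℝ)
    (ξ : X →L[ℝ] ℝ) (hξ : ∀ xc ∈ Xc, ξ (xc - xd) ≤ Rc xc - Rc xd)
    (ψ : ℝ → ℝ)
    (hψmono : MonotoneOn ψ (Set.Ici (0 : ℝ)))
    (hψnn : ∀ t : ℝ, 0 ≤ t → 0 ≤ ψ t)
    (hVSC : ∀ xc, xc ∈ Xc → xc ∈ U →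
      -(ξ (xc - xd)) ≤ b * (Rc xc - Rc xd - ξ (xc - xd)) + ψ (‖K (r xc - r xd)‖ ^ p))
    (Q : Xt → Xt → ℝ)
    (Cψ : ℝ) (hCψ : 1 ≤ Cψ)
    (hψsub : ∀ a c : ℝ, 0 ≤ a → 0 ≤ c → ψ (a + c) ≤ Cψ * (ψ a + ψ c))
    (RP : X → ℝ) (hRP0 : RP 0 = 0)
    (γ CP : ℝ) (hγ : Cψ < γ)
    (hCP : (2 : ℝ) ^ (p - 1) * ‖K‖ ^ p * Lr ^ p ≤ CP)
    (hRPlb : ∀ v : X, γ * ψ (CP * ‖v‖ ^ p) ≤ RP v)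
    (CtQ : ℝ) (hCtQ : 0 < CtQ)
    (hQt : ∀ v : Xt, Q (r xd) v ^ p ≤
      CtQ * ((Rc (Ip (rinv v)) - Rc xd - ξ (Ip (rinv v) - xd)) + ψ (CP * ‖P (rinv v)‖ ^ p)))
    (α β : ℝ) (hα : 0 < α) (hβ : 0 < β)
    (Cη η : ℝ) (hη : η ≤ Cη * δ ^ p)
    (Jα : Xt → ℝ)
    (hJα : ∀ v, Jα v = ‖K v + F x0 - yδ‖ ^ p +
      α * (Rc (Ip (rinv v)) + RP (P (rinv v))))
    (Jβ : Xt → X → ℝ)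
    (hJβ : ∀ v x, Jβ v x = β * Q (r x) v ^ p + ‖P x‖ ^ p)
    (rsm : Xt) (xsm : X)
    (hmin1 : Jα rsm ≤ Jα (r xd) + η)
    (hmin2 : Jβ rsm xsm ≤ Jβ rsm xd + η)
    (cl err res Cb : ℝ)
    (hcl : cl = min (1 - b) (γ - Cψ) / (2 * CtQ))
    (herr : err = (min (1 - b) (γ - Cψ) / (2 * Cψ)) *
        ((Rc (Ip (rinv rsm)) - Rc xd - ξ (Ip (rinv rsm) - xd)) +
          ψ (CP * ‖P (rinv rsm)‖ ^ p)) +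
      (cl / Cψ) * (Q (r xsm) rsm ^ p + (1 / β) * ‖P xsm‖ ^ p))
    (hres : res = ((2 : ℝ) ^ (1 - p) / Cψ) * ‖K (rsm - r xd)‖ ^ p)
    (hCb : Cb = (2 : ℝ) ^ (2 * p - 2) * Cψ) :
    res + α * err ≤ ((2 + Cη + (α / β) * cl * Cη) / Cψ) * δ ^ p + α * ψ (Cb * res) := by
  have hp0 : 0 < p := by linarith
  have hIpxd : Ip xd = xd := by simpa [hPxd, sub_eq_zero, eq_comm] using hPIp xd
  have hKxd : K (r xd) = F xd - F x0 := (hRI xd hxdU).symm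
  set x := Ip (rinv rsm)
  set v := P (rinv rsm)
  set Δ := Rc x - Rc xd - ξ (x - xd) with hΔdef
  set A := ψ (CP * ‖v‖ ^ p)
  have hCP' := two_rpow_mul_opNorm_rpow_mul_max_le
    (fun w _ => ⟨rinv w, hrmem w, hrright w⟩) hLr hp0 K hCP
  have hΔ : 0 ≤ Δ := by linarith [hξ x (hIpXc _)]
  have hA : 0 ≤ A := hψnn _ (mul_nonneg (le_trans (by positivity) hCP') (by positivity))
  have hCbres : Cb * res = 2 ^ (p - 1) * ‖K (rsm - r xd)‖ ^ p := by
    have h2 : (2 : ℝ) ^ (2 * p - 2) * 2 ^ (1 - p) = 2 ^ (p - 1) := by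
      rw [← Real.rpow_add two_pos]; ring_nf
    rw [hCb, hres, ← h2]
    field_simp
  have hlin : ψ (‖K (r x - r xd)‖ ^ p) ≤ Cψ * (A + ψ (Cb * res)) := by
    have hxr : ‖r x - rsm‖ ≤ max Lr 0 * ‖v‖ :=
      calc ‖r x - rsm‖ = ‖r x - r (rinv rsm)‖ := by rw [hrright]
        _ ≤ Lr * ‖x - rinv rsm‖ := hLr _ (hIprinvU rsm) _ (hrmem rsm)
        _ = Lr * ‖v‖ := by rw [show v = rinv rsm - x from hPIp _, norm_sub_rev]
        _ ≤ max Lr 0 * ‖v‖ := by gcongr; exact le_max_left _ _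
    rw [hCbres]
    exact hψmono.apply_rpow_norm_map_sub_le hψsub hp K (le_max_right _ _) (norm_nonneg _) hxr hCP'
  have hres' : Cψ * res ≤ ‖K rsm + F x0 - yδ‖ ^ p + δ ^ p := by
    rw [hres, map_sub, hKxd, show K rsm - (F xd - F x0) = K rsm + F x0 - yδ - (F xd - yδ) by abel]
    field_simp
    exact two_rpow_mul_norm_sub_rpow_le hp _ hnoise
  have hcoer : min (1 - b) (γ - Cψ) * (Δ + A) ≤ Rc x + RP v - Rc xd + Cψ * ψ (Cb * res) :=
    (min_mul_add_le_mul_add_mul hΔ hA).trans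
      (by linarith [hVSC x (hIpXc _) (hIprinvU rsm), hRPlb v])
  have hfirst : ‖K rsm + F x0 - yδ‖ ^ p + α * (min (1 - b) (γ - Cψ) * (Δ + A)) ≤
      δ ^ p + η + α * (Cψ * ψ (Cb * res)) := by
    have hJ := hmin1
    rw [hJα, hJα, hrleft xd hxdU, hIpxd, hPxd, hRP0, hKxd, sub_add_cancel] at hJ
    linarith [mul_le_mul_of_nonneg_left hcoer hα.le,
      Real.rpow_le_rpow (norm_nonneg _) hnoise hp0.le]
  have hsecond : Q (r xsm) rsm ^ p + 1 / β * ‖P xsm‖ ^ p ≤ CtQ * (Δ + A) + η / β := by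
    have hJ := hmin2
    rw [hJβ, hJβ, hPxd, norm_zero, Real.zero_rpow hp0.ne', add_zero] at hJ
    have := mul_le_mul_of_nonneg_left (hQt rsm) hβ.le
    field_simp
    linarith
  exact add_mul_le_of_stage_estimates (by linarith) hCtQ hα.le hβ
    (lt_min (by linarith) (by linarith)).le hcl herr hres' hfirst hsecond hη

/-- The central minimality estimate for split minimization (proof of Theorem 2.5):
comparison with the exact solution yields
`res + α·err ≤ ((2 + C_η + (α/β)·c̲·C_η)/C_ψ)·δ^p + α·ψ(C̄·res)`. -/
theorem stmt_8
    (p : ℝ) (hp : 1 ≤ p) (b : ℝ) (hb0 : 0 < b) (hb1 : b < 1)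
    {X Xt Y : Type*} [NormedAddCommGroup X] [NormedSpace ℝ X]
    [NormedAddCommGroup Xt] [NormedSpace ℝ Xt]
    [NormedAddCommGroup Y] [NormedSpace ℝ Y]
    (Xc : Submodule ℝ X) (U : Set X) (x0 xd : X)
    (hx0U : x0 ∈ U) (hx0c : x0 ∈ Xc) (hxdU : xd ∈ U) (hxdc : xd ∈ Xc)
    (F : X → Y) (K : Xt →L[ℝ] Y)
    (r : X → Xt) (rinv : Xt → X)
    (hrleft : ∀ x ∈ U, rinv (r x) = x)
    (hrmem : ∀ v : Xt, rinv v ∈ U) (hrright : ∀ v : Xt, r (rinv v) = v)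
    (Lr : ℝ) (hLr : ∀ x1 ∈ U, ∀ x2 ∈ U, ‖r x1 - r x2‖ ≤ Lr * ‖x1 - x2‖)
    (hRI : ∀ x ∈ U, F x - F x0 = K (r x))
    (P Ip : X → X) (hPIp : ∀ x, P x = x - Ip x)
    (hIpXc : ∀ x, Ip x ∈ Xc)
    (hPxd : P xd = 0) (hPx0 : P x0 = 0)
    (hIprinvU : ∀ v : Xt, Ip (rinv v) ∈ U)
    (δ : ℝ) (hδ : 0 < δ) (yδ : Y) (hnoise : ‖F xd - yδ‖ ≤ δ)
    (Rc : X → ℝ) (hRcnn : ∀ x, 0 ≤ Rc x)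
    (ξ : X →L[ℝ] ℝ) (hξ : ∀ xc ∈ Xc, ξ (xc - xd) ≤ Rc xc - Rc xd)
    (ψ : ℝ → ℝ) (hψcont : ContinuousOn ψ (Set.Ici (0 : ℝ)))
    (hψmono : MonotoneOn ψ (Set.Ici (0 : ℝ)))
    (hψ0 : ψ 0 = 0) (hψnn : ∀ t : ℝ, 0 ≤ t → 0 ≤ ψ t)
    (hVSC : ∀ xc, xc ∈ Xc → xc ∈ U →
      -(ξ (xc - xd)) ≤ b * (Rc xc - Rc xd - ξ (xc - xd)) + ψ (‖K (r xc - r xd)‖ ^ p))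
    (Q : Xt → Xt → ℝ) (hQnn : ∀ v1 v2, 0 ≤ Q v1 v2) (hQdiag : ∀ v, Q v v = 0)
    (Cψ : ℝ) (hCψ : 1 ≤ Cψ)
    (hψsub : ∀ a c : ℝ, 0 ≤ a → 0 ≤ c → ψ (a + c) ≤ Cψ * (ψ a + ψ c))
    (RP : X → ℝ) (hRP0 : RP 0 = 0) (hRPnn : ∀ v, 0 ≤ RP v)
    (γ CP : ℝ) (hγ : Cψ < γ)
    (hCP : (2 : ℝ) ^ (p - 1) * ‖K‖ ^ p * Lr ^ p ≤ CP)
    (hRPlb : ∀ v : X, γ * ψ (CP * ‖v‖ ^ p) ≤ RP v)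
    (CtQ : ℝ) (hCtQ : 0 < CtQ)
    (hQt : ∀ v : Xt, Q (r xd) v ^ p ≤
      CtQ * ((Rc (Ip (rinv v)) - Rc xd - ξ (Ip (rinv v) - xd)) + ψ (CP * ‖P (rinv v)‖ ^ p)))
    (α β : ℝ) (hα : 0 < α) (hβ : 0 < β)
    (Cη η : ℝ) (hCη : 0 < Cη) (hη0 : 0 ≤ η) (hη : η ≤ Cη * δ ^ p)
    (Jα : Xt → ℝ)
    (hJα : ∀ v, Jα v = ‖K v + F x0 - yδ‖ ^ p +
      α * (Rc (Ip (rinv v)) + RP (P (rinv v))))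
    (Jβ : Xt → X → ℝ)
    (hJβ : ∀ v x, Jβ v x = β * Q (r x) v ^ p + ‖P x‖ ^ p)
    (rsm : Xt) (xsm : X) (hxsmU : xsm ∈ U)
    (hmin1 : Jα rsm ≤ Jα (r xd) + η)
    (hmin2 : Jβ rsm xsm ≤ Jβ rsm xd + η)
    (cl err res Cb : ℝ)
    (hcl : cl = min (1 - b) (γ - Cψ) / (2 * CtQ))
    (herr : err = (min (1 - b) (γ - Cψ) / (2 * Cψ)) *
        ((Rc (Ip (rinv rsm)) - Rc xd - ξ (Ip (rinv rsm) - xd)) +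
          ψ (CP * ‖P (rinv rsm)‖ ^ p)) +
      (cl / Cψ) * (Q (r xsm) rsm ^ p + (1 / β) * ‖P xsm‖ ^ p))
    (hres : res = ((2 : ℝ) ^ (1 - p) / Cψ) * ‖K (rsm - r xd)‖ ^ p)
    (hCb : Cb = (2 : ℝ) ^ (2 * p - 2) * Cψ) :
    res + α * err ≤ ((2 + Cη + (α / β) * cl * Cη) / Cψ) * δ ^ p + α * ψ (Cb * res) :=
  stmt_8_general p hp b hb1 Xc U x0 xd hxdU F K r rinv hrleft hrmem hrright Lr hLr hRI P Ip hPIp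
    hIpXc hPxd hIprinvU δ yδ hnoise Rc ξ hξ ψ hψmono hψnn hVSC Q Cψ hCψ hψsub RP hRP0 γ CP hγ hCP
    hRPlb CtQ hCtQ hQt α β hα hβ Cη η hη Jα hJα Jβ hJβ rsm xsm hmin1 hmin2 cl err res Cb hcl herr
    hres hCb
end

section
/- Under the hypotheses of the frozen Newton rate theorem, a single Newton step satisfies the following estimate: if x_n ∈ U and (r̂_{n+1}, x_{n+1}) ∈ X̃ × U satisfies J_n(r̂_{n+1}, x_{n+1}) ≤ J_n(r(x†), x†) + η_n, where J_n(r̂, x) := ‖K r̂ + F(x₀) − y^δ‖^p + α_n·R(r̂) + β_n·‖r(x_n) + r'(x_n)(x − x_n) − r̂‖^p + ‖P(x)‖^p with β_n := c_{βα}·α_n, then res_{n+1} + α_n·err_{n+1} ≤ d_n + α_n·ψ(C̄·res_{n+1}), where err_{n+1} := (c_{βα}/C_ψ)·(‖r̂_{n+1} − r(x†)‖^p + (2^{1−p} − 2^{p−1}·c_tcr)·‖r(x_{n+1}) − r(x†)‖^p), res_{n+1} := (1/C_ψ)·(2^{1−p}·‖K(r̂_{n+1} − r(x†))‖^p + ‖P(x_{n+1})‖^p),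 d_n := (c_{βα}/C_ψ)·α_n·(1+2^{p−1})·c_tcr·‖r(x_n) − r(x†)‖^p + (2δ^p + η_n)/C_ψ, and C̄ := 2^{2p−2}·C_ψ. -/
private lemma wpow {p : ℝ} (hp : 1 ≤ p) {x y θ : ℝ} (hx : 0 ≤ x) (hy : 0 ≤ y)
    (hθ : 0 < θ) (hθ1 : θ < 1) :
    (x + y) ^ p ≤ θ ^ (1 - p) * x ^ p + (1 - θ) ^ (1 - p) * y ^ p := by
  have hθ' : 0 < 1 - θ := by linarith
  have h := (convexOn_rpow hp).2 (Set.mem_Ici.2 (div_nonneg hx hθ.le))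
    (Set.mem_Ici.2 (div_nonneg hy hθ'.le)) hθ.le hθ'.le (by ring)
  simp only [smul_eq_mul] at h
  have e1 : θ * (x / θ) = x := by field_simp
  have e2 : (1 - θ) * (y / (1 - θ)) = y := by field_simp
  rw [e1, e2] at h
  have d1 : θ * (x / θ) ^ p = θ ^ (1 - p) * x ^ p := by
    rw [Real.div_rpow hx hθ.le, Real.rpow_sub hθ, Real.rpow_one]; ring
  have d2 : (1 - θ) * (y / (1 - θ)) ^ p = (1 - θ) ^ (1 - p) * y ^ p := by
    rw [Real.div_rpow hy hθ'.le, Real.rpow_sub hθ', Real.rpow_one]; ring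
  rw [d1, d2] at h
  exact h

private lemma pow2 {p : ℝ} (hp : 1 ≤ p) {x y : ℝ} (hx : 0 ≤ x) (hy : 0 ≤ y) :
    (x + y) ^ p ≤ 2 ^ (p - 1) * (x ^ p + y ^ p) := by
  have h := wpow hp hx hy (θ := (1:ℝ)/2) one_half_pos one_half_lt_one
  have e : ((1:ℝ) - 1/2) = 1/2 := by norm_num
  have e2 : ((1:ℝ)/2) ^ (1 - p) = 2 ^ (p - 1) := by
    rw [one_div, Real.inv_rpow (by norm_num : (0:ℝ) ≤ 2), ← Real.rpow_neg (by norm_num), neg_sub]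
  rw [e, e2] at h
  linarith

private lemma two_rpow_ge (x : ℝ) : 1 + x * Real.log 2 ≤ (2:ℝ) ^ x := by
  rw [Real.rpow_def_of_pos two_pos]
  have h := Real.add_one_le_exp (Real.log 2 * x)
  nlinarith [h]

private lemma dagger {p c e s q dn : ℝ} (hp : 1 ≤ p) (hc : 0 < c)
    (hden : 0 < (2:ℝ) ^ (1 - p) - (2:ℝ) ^ (p - 1) * c)
    (he : 0 ≤ e) (hs : 0 ≤ s) (hq : 0 ≤ q) (hdn : 0 ≤ dn)
    (hcon : (1 - c) * e ≤ s + (q + c * dn)) :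
    ((2:ℝ) ^ (1 - p) - (2:ℝ) ^ (p - 1) * c) * e ^ p
      ≤ s ^ p + 3 * q ^ p + (2:ℝ) ^ (p - 1) * c * dn ^ p := by
  set t1 := (2:ℝ) ^ (p - 1) with ht1
  set t2 := (2:ℝ) ^ (1 - p) with ht2
  have ht1pos : 0 < t1 := Real.rpow_pos_of_pos two_pos _
  have ht2pos : 0 < t2 := Real.rpow_pos_of_pos two_pos _
  have htt : t1 * t2 = 1 := by rw [ht1, ht2, ← Real.rpow_add two_pos]; norm_num
  have hc2 : t1 * t1 * c < 1 := by
    have h1 : t1 * c < t2 := by linarith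
    calc t1 * t1 * c = t1 * (t1 * c) := by ring
      _ < t1 * t2 := by exact mul_lt_mul_of_pos_left h1 ht1pos
      _ = 1 := htt
  have hlog2 : (1:ℝ)/2 ≤ Real.log 2 := by
    have := Real.log_two_gt_d9
    linarith
  have hpt : p ≤ t1 * t1 := by
    have h2 : t1 * t1 = (2:ℝ) ^ (2 * p - 2) := by
      rw [ht1, ← Real.rpow_add two_pos]; congr 1; ring
    have h3 := two_rpow_ge (2 * p - 2)
    nlinarith [h3, hlog2, hp]
  have hBern : 1 - p * c ≤ (1 - c) ^ p := by
    have hone : c ≤ 1 := by nlinarith [hc2, hpt, hc.le, hp]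
    have h := one_add_mul_self_le_rpow_one_add (s := -c) (by linarith) hp
    have e1 : (1:ℝ) + -c = 1 - c := by ring
    rw [e1] at h
    linarith
  have hpc : p * c < 1 := by nlinarith [hpt, hc.le, hc2]
  have hc1 : c < 1 := by nlinarith [hpc, hp, hc]
  have hA : 1 - t1 * t1 * c ≤ (1 - c) ^ p := by nlinarith [hpt, hc.le, hBern]
  have hA0 : 0 ≤ 1 - t1 * t1 * c := by linarith
  have hcm : 0 < 1 - c / 2 := by linarith
  have hcm1 : 1 - c / 2 ≤ 1 := by linarith
  have hBp : 1 - p * (c / 2) ≤ (1 - c / 2) ^ p := by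
    have h := one_add_mul_self_le_rpow_one_add (s := -(c/2)) (by linarith) hp
    have e1 : (1:ℝ) + -(c/2) = 1 - c/2 := by ring
    rw [e1] at h
    linarith
  have hB1 : (1:ℝ)/3 ≤ (1 - c/2) ^ (p - 1) := by
    have hmono : (1 - c/2) ^ p ≤ (1 - c/2) ^ (p - 1) :=
      Real.rpow_le_rpow_of_exponent_ge hcm hcm1 (by linarith)
    linarith [hBp, hmono, hpc]
  have hB : (1 - c/2) ^ (1 - p) ≤ 3 := by
    have h0 : 0 < (1 - c/2) ^ (p - 1) := Real.rpow_pos_of_pos hcm _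
    have e1 : (1 - c/2) ^ (1 - p) = ((1 - c/2) ^ (p - 1))⁻¹ := by
      rw [show (1:ℝ) - p = -(p - 1) by ring, Real.rpow_neg hcm.le]
    rw [e1]
    rw [inv_le_comm₀ h0 (by norm_num : (0:ℝ) < 3)]
    calc (3:ℝ)⁻¹ = 1/3 := by norm_num
      _ ≤ _ := hB1
  -- main chain
  have hP1 : 0 < (1 - c) ^ p := Real.rpow_pos_of_pos (by linarith) _
  have hEc : ((1 - c) * e) ^ p = (1 - c) ^ p * e ^ p := Real.mul_rpow (by linarith) he
  have hp0 : (0:ℝ) ≤ p := by linarith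
  have k1 : ((1 - c) * e) ^ p ≤ (s + (q + c * dn)) ^ p :=
    Real.rpow_le_rpow (mul_nonneg (by linarith) he) hcon hp0
  have k2 : (s + (q + c * dn)) ^ p ≤ t1 * (s ^ p + (q + c * dn) ^ p) :=
    pow2 hp hs (by positivity)
  have k3 : (q + c * dn) ^ p ≤ (1 - c/2) ^ (1 - p) * q ^ p + (c/2) ^ (1 - p) * (c * dn) ^ p := by
    have h := wpow hp hq (mul_nonneg hc.le hdn) (θ := 1 - c/2) hcm (by linarith)
    have e1 : (1:ℝ) - (1 - c/2) = c/2 := by ring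
    rw [e1] at h
    exact h
  have hct : c ^ (1 - p) * c ^ p = c := by
    rw [← Real.rpow_add hc]; norm_num
  have ht2inv : t2⁻¹ = t1 := inv_eq_of_mul_eq_one_right (by rw [mul_comm]; exact htt)
  have k4 : (c/2) ^ (1 - p) * (c * dn) ^ p = t1 * (c * dn ^ p) := by
    rw [Real.div_rpow hc.le (by norm_num : (0:ℝ) ≤ 2), Real.mul_rpow hc.le hdn, ← ht2,
      div_eq_mul_inv, ht2inv]
    calc c ^ (1 - p) * t1 * (c ^ p * dn ^ p) = (c ^ (1 - p) * c ^ p) * dn ^ p * t1 := by ring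
      _ = t1 * (c * dn ^ p) := by rw [hct]; ring
  set B := (1 - c/2) ^ (1 - p) with hBdef
  have hB0 : 0 ≤ B := Real.rpow_nonneg hcm.le _
  have hchain : (1 - c) ^ p * e ^ p ≤ t1 * s ^ p + t1 * B * q ^ p + t1 * t1 * (c * dn ^ p) := by
    calc (1 - c) ^ p * e ^ p = ((1 - c) * e) ^ p := hEc.symm
      _ ≤ (s + (q + c * dn)) ^ p := k1
      _ ≤ t1 * (s ^ p + (q + c * dn) ^ p) := k2
      _ ≤ t1 * (s ^ p + (B * q ^ p + t1 * (c * dn ^ p))) := by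
          apply mul_le_mul_of_nonneg_left _ ht1pos.le
          have h := k3; rw [k4] at h; linarith
      _ = t1 * s ^ p + t1 * B * q ^ p + t1 * t1 * (c * dn ^ p) := by ring
  have hκ0 : 0 ≤ t2 - t1 * c := hden.le
  have hκt1 : (t2 - t1 * c) * t1 = 1 - t1 * t1 * c := by
    have h : (t2 - t1 * c) * t1 = t1 * t2 - t1 * t1 * c := by ring
    rw [h, htt]
  have c1 : (t2 - t1 * c) * t1 ≤ (1 - c) ^ p := by rw [hκt1]; exact hA
  have hsp : 0 ≤ s ^ p := Real.rpow_nonneg hs _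
  have hqp : 0 ≤ q ^ p := Real.rpow_nonneg hq _
  have hdnp : 0 ≤ dn ^ p := Real.rpow_nonneg hdn _
  have hκt1nn : 0 ≤ (t2 - t1 * c) * t1 := mul_nonneg hκ0 ht1pos.le
  have c2 : (t2 - t1 * c) * (t1 * B) ≤ 3 * (1 - c) ^ p := by
    have h := mul_le_mul_of_nonneg_left hB hκt1nn
    linarith [c1, h]
  suffices h : (1 - c) ^ p * ((t2 - t1 * c) * e ^ p) ≤ (1 - c) ^ p * (s ^ p + 3 * q ^ p + t1 * c * dn ^ p) by
    exact le_of_mul_le_mul_left h hP1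
  have hmul := mul_le_mul_of_nonneg_left hchain hκ0
  have m1 := mul_le_mul_of_nonneg_right c1 hsp
  have m2 := mul_le_mul_of_nonneg_right c2 hqp
  have m3 := mul_le_mul_of_nonneg_right c1 (mul_nonneg (mul_nonneg ht1pos.le hc.le) hdnp)
  linarith [hmul, m1, m2, m3]

set_option maxHeartbeats 1000000

/-- The single-step estimate for the frozen Newton method (proof of Theorem 2.7):
`res_{n+1} + α_n·err_{n+1} ≤ d_n + α_n·ψ(C̄·res_{n+1})`. -/
theorem stmt_11
    (p : ℝ) (hp : 1 ≤ p) (b : ℝ) (hb0 : 0 < b) (hb1 : b < 1)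
    {X Xt Y : Type*} [NormedAddCommGroup X] [NormedSpace ℝ X]
    [NormedAddCommGroup Xt] [NormedSpace ℝ Xt]
    [NormedAddCommGroup Y] [NormedSpace ℝ Y]
    (Xc : Submodule ℝ X) (U : Set X) (x0 xd : X)
    (hx0U : x0 ∈ U) (hx0c : x0 ∈ Xc) (hxdU : xd ∈ U) (hxdc : xd ∈ Xc)
    (F : X → Y) (K : Xt →L[ℝ] Y)
    (r : X → Xt) (rinv : Xt → X)
    (hrleft : ∀ x ∈ U, rinv (r x) = x)
    (hrmem : ∀ v : Xt, rinv v ∈ U) (hrright : ∀ v : Xt, r (rinv v) = v)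
    (Lr : ℝ) (hLr : ∀ x1 ∈ U, ∀ x2 ∈ U, ‖r x1 - r x2‖ ≤ Lr * ‖x1 - x2‖)
    (hRI : ∀ x ∈ U, F x - F x0 = K (r x))
    (P Ip : X → X) (hPIp : ∀ x, P x = x - Ip x)
    (hIpXc : ∀ x, Ip x ∈ Xc)
    (hPxd : P xd = 0) (hPx0 : P x0 = 0)
    (hIprinvU : ∀ v : Xt, Ip (rinv v) ∈ U)
    (δ : ℝ) (hδ : 0 < δ) (yδ : Y) (hnoise : ‖F xd - yδ‖ ≤ δ)
    (Rc : X → ℝ) (hRcnn : ∀ x, 0 ≤ Rc x)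
    (ξ : X →L[ℝ] ℝ) (hξ : ∀ xc ∈ Xc, ξ (xc - xd) ≤ Rc xc - Rc xd)
    (ψ : ℝ → ℝ) (hψcont : ContinuousOn ψ (Set.Ici (0 : ℝ)))
    (hψmono : MonotoneOn ψ (Set.Ici (0 : ℝ)))
    (hψ0 : ψ 0 = 0) (hψnn : ∀ t : ℝ, 0 ≤ t → 0 ≤ ψ t)
    (hVSC : ∀ xc, xc ∈ Xc → xc ∈ U →
      -(ξ (xc - xd)) ≤ b * (Rc xc - Rc xd - ξ (xc - xd)) + ψ (‖K (r xc - r xd)‖ ^ p))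
    (Cψ : ℝ) (hCψ : 1 ≤ Cψ)
    (hψsub : ∀ a c : ℝ, 0 ≤ a → 0 ≤ c → ψ (a + c) ≤ Cψ * (ψ a + ψ c))
    (RP : X → ℝ) (hRP0 : RP 0 = 0) (hRPnn : ∀ v, 0 ≤ RP v)
    (γ CP : ℝ) (hγ : Cψ < γ)
    (hCP : (2 : ℝ) ^ (p - 1) * ‖K‖ ^ p * Lr ^ p ≤ CP)
    (hRPlb : ∀ v : X, γ * ψ (CP * ‖v‖ ^ p) ≤ RP v)
    (CtQ : ℝ) (hCtQ : 0 < CtQ)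
    (hQt : ∀ v : Xt, ‖r xd - v‖ ^ p ≤
      CtQ * ((Rc (Ip (rinv v)) - Rc xd - ξ (Ip (rinv v) - xd)) + ψ (CP * ‖P (rinv v)‖ ^ p)))
    (r' : X → X →L[ℝ] Xt)
    (hGat : ∀ x ∈ U, ∀ h : X,
      Filter.Tendsto (fun t : ℝ => t⁻¹ • (r (x + t • h) - r x))
        (nhdsWithin (0 : ℝ) ({0}ᶜ)) (nhds (r' x h)))
    (ctcr : ℝ) (hctcr : 0 < ctcr)
    (hden : 0 < (2 : ℝ) ^ (1 - p) - (2 : ℝ) ^ (p - 1) * ctcr)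
    (htc : ∀ x1 ∈ U, ∀ x2 ∈ U,
      ‖r x1 - r x2 - r' x2 (x1 - x2)‖ ≤ ctcr * ‖r x1 - r x2‖)
    (cβα : ℝ) (hcβα0 : 0 < cβα)
    (hcβα : cβα ≤ min (1 - b) (γ - Cψ) / (4 * CtQ))
    (αn ηn : ℝ) (hαn : 0 < αn) (hηn : 0 < ηn)
    (xn : X) (hxnU : xn ∈ U)
    (Jn : Xt → X → ℝ)
    (hJn : ∀ v x, Jn v x = ‖K v + F x0 - yδ‖ ^ p +
      αn * (Rc (Ip (rinv v)) + RP (P (rinv v))) +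
      cβα * αn * ‖r xn + r' xn (x - xn) - v‖ ^ p + ‖P x‖ ^ p)
    (rh1 : Xt) (x1 : X) (hx1U : x1 ∈ U)
    (hmin : Jn rh1 x1 ≤ Jn (r xd) xd + ηn)
    (err res d Cb : ℝ)
    (herr : err = (cβα / Cψ) * (‖rh1 - r xd‖ ^ p +
      ((2 : ℝ) ^ (1 - p) - (2 : ℝ) ^ (p - 1) * ctcr) * ‖r x1 - r xd‖ ^ p))
    (hres : res = (1 / Cψ) * ((2 : ℝ) ^ (1 - p) * ‖K (rh1 - r xd)‖ ^ p + ‖P x1‖ ^ p))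
    (hd : d = (cβα / Cψ) * αn * (1 + (2 : ℝ) ^ (p - 1)) * ctcr * ‖r xn - r xd‖ ^ p +
      (2 * δ ^ p + ηn) / Cψ)
    (hCb : Cb = (2 : ℝ) ^ (2 * p - 2) * Cψ) :
    res + αn * err ≤ d + αn * ψ (Cb * res) := by
  have hp0 : (0:ℝ) < p := lt_of_lt_of_le one_pos hp
  have hCψ0 : (0:ℝ) < Cψ := lt_of_lt_of_le one_pos hCψ
  have ht1pos : (0:ℝ) < (2:ℝ) ^ (p - 1) := Real.rpow_pos_of_pos two_pos _
  have ht2pos : (0:ℝ) < (2:ℝ) ^ (1 - p) := Real.rpow_pos_of_pos two_pos _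
  have hzU : rinv rh1 ∈ U := hrmem rh1
  have hrz : r (rinv rh1) = rh1 := hrright rh1
  have hwXc : Ip (rinv rh1) ∈ Xc := hIpXc (rinv rh1)
  have hwU : Ip (rinv rh1) ∈ U := hIprinvU rh1
  -- expand the minimality property
  rw [hJn rh1 x1, hJn (r xd) xd, hrleft xd hxdU] at hmin
  have hIpxd : Ip xd = xd := by
    have h := hPIp xd
    rw [hPxd] at h
    have := sub_eq_zero.mp h.symm
    exact this.symm
  rw [hIpxd, hPxd, hRP0] at hmin
  -- bound the three terms of J_n(r(x†), x†)
  have hKrxd : K (r xd) + F x0 - yδ = F xd - yδ := by rw [← hRI xd hxdU]; abel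
  have hbnd1 : ‖K (r xd) + F x0 - yδ‖ ^ p ≤ δ ^ p := by
    rw [hKrxd]; exact Real.rpow_le_rpow (norm_nonneg _) hnoise hp0.le
  have hZ0 : ‖(0:X)‖ ^ p = 0 := by rw [norm_zero, Real.zero_rpow hp0.ne']
  have htd : ‖r xn + r' xn (xd - xn) - r xd‖ ≤ ctcr * ‖r xn - r xd‖ := by
    have h := htc xd hxdU xn hxnU
    have e : r xn + r' xn (xd - xn) - r xd = -(r xd - r xn - r' xn (xd - xn)) := by abel
    rw [e, norm_neg, norm_sub_rev (r xn) (r xd)]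
    exact h
  have hctcr1 : ctcr < 1 := by
    have h1 : (2:ℝ) ^ (p - 1) * ctcr < (2:ℝ) ^ (1 - p) := by linarith
    have h2 : (2:ℝ) ^ (1 - p) ≤ 1 := by
      have := Real.rpow_le_rpow_of_exponent_le one_le_two (show 1 - p ≤ 0 by linarith)
      rwa [Real.rpow_zero] at this
    have h3 : (1:ℝ) ≤ (2:ℝ) ^ (p - 1) := by
      have := Real.rpow_le_rpow_of_exponent_le one_le_two (show (0:ℝ) ≤ p - 1 by linarith)
      rwa [Real.rpow_zero] at this
    nlinarith
  have hbnd3 : ‖r xn + r' xn (xd - xn) - r xd‖ ^ p ≤ ctcr * ‖r xn - r xd‖ ^ p := by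
    have h1 : ‖r xn + r' xn (xd - xn) - r xd‖ ^ p ≤ (ctcr * ‖r xn - r xd‖) ^ p :=
      Real.rpow_le_rpow (norm_nonneg _) htd hp0.le
    have h2 : (ctcr * ‖r xn - r xd‖) ^ p = ctcr ^ p * ‖r xn - r xd‖ ^ p :=
      Real.mul_rpow hctcr.le (norm_nonneg _)
    have h3 : ctcr ^ p ≤ ctcr := by
      calc ctcr ^ p ≤ ctcr ^ (1:ℝ) := Real.rpow_le_rpow_of_exponent_ge hctcr hctcr1.le hp
        _ = ctcr := Real.rpow_one _
    have h4 := mul_le_mul_of_nonneg_right h3 (Real.rpow_nonneg (norm_nonneg (r xn - r xd)) p)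
    calc ‖r xn + r' xn (xd - xn) - r xd‖ ^ p ≤ ctcr ^ p * ‖r xn - r xd‖ ^ p := by rw [← h2]; exact h1
      _ ≤ ctcr * ‖r xn - r xd‖ ^ p := h4
  -- residual lower bound
  have hK1 : K (rh1 - r xd) = (K rh1 + F x0 - yδ) - (F xd - yδ) := by
    rw [map_sub, ← hRI xd hxdU]; abel
  have hkk1 : ‖K (rh1 - r xd)‖ ≤ ‖K rh1 + F x0 - yδ‖ + δ := by
    rw [hK1]
    calc ‖(K rh1 + F x0 - yδ) - (F xd - yδ)‖ ≤ ‖K rh1 + F x0 - yδ‖ + ‖F xd - yδ‖ := norm_sub_le _ _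
      _ ≤ ‖K rh1 + F x0 - yδ‖ + δ := by linarith
  have hbnd2 : (2:ℝ) ^ (1 - p) * ‖K (rh1 - r xd)‖ ^ p ≤ ‖K rh1 + F x0 - yδ‖ ^ p + δ ^ p := by
    have h1 : ‖K (rh1 - r xd)‖ ^ p ≤ (‖K rh1 + F x0 - yδ‖ + δ) ^ p :=
      Real.rpow_le_rpow (norm_nonneg _) hkk1 hp0.le
    have h2 := pow2 hp (norm_nonneg (K rh1 + F x0 - yδ)) hδ.le
    have m1 := mul_le_mul_of_nonneg_left h1 ht2pos.le
    have m2 := mul_le_mul_of_nonneg_left h2 ht2pos.le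
    have m3 : (2:ℝ) ^ (1 - p) * ((2:ℝ) ^ (p - 1) * (‖K rh1 + F x0 - yδ‖ ^ p + δ ^ p))
        = ‖K rh1 + F x0 - yδ‖ ^ p + δ ^ p := by
      rw [← mul_assoc, ← Real.rpow_add two_pos]
      norm_num
    linarith [m1, m2, m3]
  -- source-condition estimate for the regularization term
  have hwz : Ip (rinv rh1) - rinv rh1 = -(P (rinv rh1)) := by rw [hPIp (rinv rh1)]; abel
  have hnwz : ‖Ip (rinv rh1) - rinv rh1‖ = ‖P (rinv rh1)‖ := by rw [hwz, norm_neg]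
  have hD0 : 0 ≤ Rc (Ip (rinv rh1)) - Rc xd - ξ (Ip (rinv rh1) - xd) := by
    have := hξ (Ip (rinv rh1)) hwXc
    linarith
  have hLip : ‖r (Ip (rinv rh1)) - r (rinv rh1)‖ ≤ Lr * ‖P (rinv rh1)‖ := by
    rw [← hnwz]; exact hLr (Ip (rinv rh1)) hwU (rinv rh1) hzU
  have hLrPz : 0 ≤ Lr * ‖P (rinv rh1)‖ := le_trans (norm_nonneg _) hLip
  have hu : ‖K (r (Ip (rinv rh1)) - r xd)‖ ≤ ‖K‖ * (Lr * ‖P (rinv rh1)‖) + ‖K (rh1 - r xd)‖ := by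
    have e : K (r (Ip (rinv rh1)) - r xd) = K (r (Ip (rinv rh1)) - r (rinv rh1)) + K (rh1 - r xd) := by
      rw [← map_add]
      congr 1
      rw [hrz]
      abel
    have h1 : ‖K (r (Ip (rinv rh1)) - r (rinv rh1))‖ ≤ ‖K‖ * ‖r (Ip (rinv rh1)) - r (rinv rh1)‖ :=
      K.le_opNorm _
    have h2 := mul_le_mul_of_nonneg_left hLip (norm_nonneg K)
    calc ‖K (r (Ip (rinv rh1)) - r xd)‖
        ≤ ‖K (r (Ip (rinv rh1)) - r (rinv rh1))‖ + ‖K (rh1 - r xd)‖ := by rw [e]; exact norm_add_le _ _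
      _ ≤ ‖K‖ * (Lr * ‖P (rinv rh1)‖) + ‖K (rh1 - r xd)‖ := by linarith
  have hKL : (2:ℝ) ^ (p - 1) * (‖K‖ * (Lr * ‖P (rinv rh1)‖)) ^ p ≤ CP * ‖P (rinv rh1)‖ ^ p := by
    rcases eq_or_lt_of_le (norm_nonneg (P (rinv rh1))) with h | h
    · rw [← h]
      simp [Real.zero_rpow hp0.ne']
    · have hLr0 : 0 ≤ Lr := by
        have h2 := hLip
        nlinarith [norm_nonneg (r (Ip (rinv rh1)) - r (rinv rh1)), h]
      have e : (‖K‖ * (Lr * ‖P (rinv rh1)‖)) ^ p = ‖K‖ ^ p * Lr ^ p * ‖P (rinv rh1)‖ ^ p := by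
        rw [Real.mul_rpow (norm_nonneg _) (mul_nonneg hLr0 (norm_nonneg _)),
          Real.mul_rpow hLr0 (norm_nonneg _)]
        ring
      rw [e]
      have h5 := mul_le_mul_of_nonneg_right hCP (Real.rpow_nonneg (norm_nonneg (P (rinv rh1))) p)
      calc (2:ℝ) ^ (p - 1) * (‖K‖ ^ p * Lr ^ p * ‖P (rinv rh1)‖ ^ p)
          = (2:ℝ) ^ (p - 1) * ‖K‖ ^ p * Lr ^ p * ‖P (rinv rh1)‖ ^ p := by ring
        _ ≤ CP * ‖P (rinv rh1)‖ ^ p := h5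
  have hW0 : 0 ≤ CP * ‖P (rinv rh1)‖ ^ p := le_trans (by positivity) hKL
  have hupow : ‖K (r (Ip (rinv rh1)) - r xd)‖ ^ p
      ≤ CP * ‖P (rinv rh1)‖ ^ p + (2:ℝ) ^ (p - 1) * ‖K (rh1 - r xd)‖ ^ p := by
    have h1 : ‖K (r (Ip (rinv rh1)) - r xd)‖ ^ p
        ≤ (‖K‖ * (Lr * ‖P (rinv rh1)‖) + ‖K (rh1 - r xd)‖) ^ p :=
      Real.rpow_le_rpow (norm_nonneg _) hu hp0.le
    have h2 := pow2 hp (mul_nonneg (norm_nonneg K) hLrPz) (norm_nonneg (K (rh1 - r xd)))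
    linarith [hKL, h1, h2]
  have hψu : ψ (‖K (r (Ip (rinv rh1)) - r xd)‖ ^ p)
      ≤ Cψ * (ψ (CP * ‖P (rinv rh1)‖ ^ p) + ψ ((2:ℝ) ^ (p - 1) * ‖K (rh1 - r xd)‖ ^ p)) := by
    have hm := hψmono (Set.mem_Ici.2 (Real.rpow_nonneg (norm_nonneg _) p))
      (Set.mem_Ici.2 (add_nonneg hW0 (by positivity))) hupow
    exact le_trans hm (hψsub _ _ hW0 (by positivity))
  have hVSCw := hVSC (Ip (rinv rh1)) hwXc hwU
  have hRP' := hRPlb (P (rinv rh1))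
  have hQt' := hQt rh1
  have hnQ : ‖r xd - rh1‖ ^ p = ‖rh1 - r xd‖ ^ p := by rw [norm_sub_rev]
  have hψW0 : 0 ≤ ψ (CP * ‖P (rinv rh1)‖ ^ p) := hψnn _ hW0
  have hmQ : 4 * cβα * ‖rh1 - r xd‖ ^ p
      ≤ (1 - b) * (Rc (Ip (rinv rh1)) - Rc xd - ξ (Ip (rinv rh1) - xd))
        + (γ - Cψ) * ψ (CP * ‖P (rinv rh1)‖ ^ p) := by
    have hm1 : min (1 - b) (γ - Cψ) ≤ 1 - b := min_le_left _ _
    have hm2 : min (1 - b) (γ - Cψ) ≤ γ - Cψ := min_le_right _ _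
    have hm0 : 0 < min (1 - b) (γ - Cψ) := lt_min (by linarith) (by linarith)
    have h4 : 4 * cβα * CtQ ≤ min (1 - b) (γ - Cψ) := by
      have := (le_div_iff₀ (by positivity : (0:ℝ) < 4 * CtQ)).mp hcβα
      linarith
    have hQle : ‖rh1 - r xd‖ ^ p
        ≤ CtQ * ((Rc (Ip (rinv rh1)) - Rc xd - ξ (Ip (rinv rh1) - xd))
          + ψ (CP * ‖P (rinv rh1)‖ ^ p)) := by rw [← hnQ]; exact hQt'
    have i1 := mul_le_mul_of_nonneg_left hQle (by positivity : (0:ℝ) ≤ 4 * cβα)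
    have i2 := mul_le_mul_of_nonneg_right h4 (add_nonneg hD0 hψW0)
    have i3 := mul_le_mul_of_nonneg_right hm1 hD0
    have i4 := mul_le_mul_of_nonneg_right hm2 hψW0
    linarith [i1, i2, i3, i4]
  -- monotonicity of ψ towards ψ (Cb * res)
  have hCbres : Cb * res = (2:ℝ) ^ (2 * p - 2) * ((2:ℝ) ^ (1 - p) * ‖K (rh1 - r xd)‖ ^ p + ‖P x1‖ ^ p) := by
    rw [hCb, hres]
    field_simp
    try ring
  have he2 : (2:ℝ) ^ (2 * p - 2) * (2:ℝ) ^ (1 - p) = (2:ℝ) ^ (p - 1) := by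
    rw [← Real.rpow_add two_pos]; congr 1; ring
  have hle : (2:ℝ) ^ (p - 1) * ‖K (rh1 - r xd)‖ ^ p ≤ Cb * res := by
    rw [hCbres]
    have e1 : (2:ℝ) ^ (2 * p - 2) * ((2:ℝ) ^ (1 - p) * ‖K (rh1 - r xd)‖ ^ p + ‖P x1‖ ^ p)
        = (2:ℝ) ^ (p - 1) * ‖K (rh1 - r xd)‖ ^ p + (2:ℝ) ^ (2 * p - 2) * ‖P x1‖ ^ p := by
      rw [mul_add, ← mul_assoc, he2]
    rw [e1]
    have : (0:ℝ) ≤ (2:ℝ) ^ (2 * p - 2) * ‖P x1‖ ^ p := by positivity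
    linarith
  have hψKmono : ψ ((2:ℝ) ^ (p - 1) * ‖K (rh1 - r xd)‖ ^ p) ≤ ψ (Cb * res) :=
    hψmono (Set.mem_Ici.2 (by positivity)) (Set.mem_Ici.2 (le_trans (by positivity) hle)) hle
  -- combined lower bound for the regularization functional
  have hRlow : 4 * cβα * ‖rh1 - r xd‖ ^ p - Cψ * ψ (Cb * res)
      ≤ Rc (Ip (rinv rh1)) + RP (P (rinv rh1)) - Rc xd := by
    have hCψψ := mul_le_mul_of_nonneg_left hψKmono hCψ0.le
    linarith [hVSCw, hψu, hRP', hmQ, hCψψ]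
  have hRlowα := mul_le_mul_of_nonneg_left hRlow hαn.le
  -- the Taylor-step scalar inequality
  have hcon : (1 - ctcr) * ‖r x1 - r xd‖
      ≤ ‖r xn + r' xn (x1 - xn) - rh1‖ + (‖rh1 - r xd‖ + ctcr * ‖r xn - r xd‖) := by
    have e : r x1 - r xd = (r xn + r' xn (x1 - xn) - rh1) + (rh1 - r xd)
        + (r x1 - r xn - r' xn (x1 - xn)) := by abel
    have h1 : ‖r x1 - r xd‖ ≤ ‖r xn + r' xn (x1 - xn) - rh1‖ + ‖rh1 - r xd‖
        + ‖r x1 - r xn - r' xn (x1 - xn)‖ := by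
      rw [e]
      calc ‖(r xn + r' xn (x1 - xn) - rh1) + (rh1 - r xd) + (r x1 - r xn - r' xn (x1 - xn))‖
          ≤ ‖(r xn + r' xn (x1 - xn) - rh1) + (rh1 - r xd)‖ + ‖r x1 - r xn - r' xn (x1 - xn)‖ :=
            norm_add_le _ _
        _ ≤ ‖r xn + r' xn (x1 - xn) - rh1‖ + ‖rh1 - r xd‖ + ‖r x1 - r xn - r' xn (x1 - xn)‖ := by
            linarith [norm_add_le (r xn + r' xn (x1 - xn) - rh1) (rh1 - r xd)]
    have h2 := htc x1 hx1U xn hxnU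
    have h3 : ‖r x1 - r xn‖ ≤ ‖r x1 - r xd‖ + ‖r xn - r xd‖ := by
      calc ‖r x1 - r xn‖ = ‖(r x1 - r xd) - (r xn - r xd)‖ := by rw [sub_sub_sub_cancel_right]
        _ ≤ ‖r x1 - r xd‖ + ‖r xn - r xd‖ := norm_sub_le _ _
    have h4 := mul_le_mul_of_nonneg_left h3 hctcr.le
    linarith
  have hdag := dagger hp hctcr hden (norm_nonneg (r x1 - r xd)) (norm_nonneg _)
    (norm_nonneg _) (norm_nonneg _) hcon
  have hdagα := mul_le_mul_of_nonneg_left hdag (by positivity : (0:ℝ) ≤ cβα * αn)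
  -- multiplied Taylor bound at xd
  have hbnd3α := mul_le_mul_of_nonneg_left hbnd3 (by positivity : (0:ℝ) ≤ cβα * αn)
  -- assemble everything
  have hres' : Cψ * res = (2:ℝ) ^ (1 - p) * ‖K (rh1 - r xd)‖ ^ p + ‖P x1‖ ^ p := by
    rw [hres]; field_simp; try ring
  have herrα : Cψ * (αn * err) = αn * (cβα * (‖rh1 - r xd‖ ^ p
      + ((2:ℝ) ^ (1 - p) - (2:ℝ) ^ (p - 1) * ctcr) * ‖r x1 - r xd‖ ^ p)) := by
    rw [herr]; field_simp; try ring
  have hd' : Cψ * d = cβα * αn * (1 + (2:ℝ) ^ (p - 1)) * ctcr * ‖r xn - r xd‖ ^ p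
      + (2 * δ ^ p + ηn) := by
    rw [hd]; field_simp; try ring
  have hfin : Cψ * (res + αn * err) ≤ Cψ * (d + αn * ψ (Cb * res)) := by
    have expand1 : Cψ * (res + αn * err) = Cψ * res + Cψ * (αn * err) := by ring
    have expand2 : Cψ * (d + αn * ψ (Cb * res)) = Cψ * d + Cψ * (αn * ψ (Cb * res)) := by ring
    rw [expand1, expand2, hres', herrα, hd']
    linarith [hmin, hbnd1, hZ0, hbnd2, hRlowα, hdagα, hbnd3α]
  exact le_of_mul_le_mul_left hfin hCψ0
end

section
/- Let q ∈ (0,1), Ĉ > 0 and C' ≥ 1 with q·C' < 1, and let (e_n)_{n≥0} and (a_n)_{n≥0} be sequences of nonnegative real numbers with a_n > 0 for all n, satisfying e_{n+1} ≤ q·e_n + Ĉ·a_n and a_n ≤ C'·a_{n+1} for all n < N. Then e_N ≤ ((q·C')^N·e_0/a_0 + Ĉ/(q·(1 − q·C')))·a_N. -/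
/-!
Dividing by `a`, the ratios `r n = e n / a n` satisfy the affine recursion
`r (n+1) ≤ (q C') r n + Ĉ C'`, so `r N ≤ (q C')^N r 0 + Ĉ C' / (1 - q C')`; finally
`C' < 1/q` bounds the fixed point `Ĉ C' / (1 - q C')` by `Ĉ / (q (1 - q C'))`.
-/

open Finset

theorem le_pow_mul_add_mul_geom_sum {ρ b : ℝ} {r : ℕ → ℝ} {N : ℕ} (hρ : 0 ≤ ρ)
    (h : ∀ n < N, r (n + 1) ≤ ρ * r n + b) :
    r N ≤ ρ ^ N * r 0 + b * ∑ i ∈ range N, ρ ^ i := by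
  suffices ∀ n ≤ N, r n ≤ ρ ^ n * r 0 + b * ∑ i ∈ range n, ρ ^ i from this N le_rfl
  intro n
  induction n with
  | zero => simp
  | succ n ih =>
    intro hn
    calc r (n + 1) ≤ ρ * r n + b := h n hn
      _ ≤ ρ * (ρ ^ n * r 0 + b * ∑ i ∈ range n, ρ ^ i) + b := by gcongr; exact ih (by omega)
      _ = ρ ^ (n + 1) * r 0 + b * ∑ i ∈ range (n + 1), ρ ^ i := by rw [geom_sum_succ]; ring

theorem le_pow_mul_add_div_of_le_mul_add {ρ b : ℝ} {r : ℕ → ℝ} {N : ℕ} (hρ0 : 0 ≤ ρ)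
    (hρ1 : ρ < 1) (hb : 0 ≤ b) (h : ∀ n < N, r (n + 1) ≤ ρ * r n + b) :
    r N ≤ ρ ^ N * r 0 + b / (1 - ρ) := by
  have hgeom : ∑ i ∈ range N, ρ ^ i ≤ 1 / (1 - ρ) := by
    have := geom_sum_Ico_le_of_lt_one (m := 0) (n := N) hρ0 hρ1
    rwa [← range_eq_Ico, pow_zero] at this
  calc r N ≤ ρ ^ N * r 0 + b * ∑ i ∈ range N, ρ ^ i := le_pow_mul_add_mul_geom_sum hρ0 h
    _ ≤ ρ ^ N * r 0 + b * (1 / (1 - ρ)) := by gcongr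
    _ = ρ ^ N * r 0 + b / (1 - ρ) := by rw [mul_one_div]

theorem div_le_mul_div_add_of_le_mul_add {q c C x x' y y' : ℝ} (hq : 0 ≤ q) (hc : 0 ≤ c)
    (hx : 0 ≤ x) (hy : 0 < y) (hy' : 0 < y') (hx' : x' ≤ q * x + c * y) (hyy' : y ≤ C * y') :
    x' / y' ≤ q * C * (x / y) + c * C := by
  rw [div_le_iff₀ hy']
  calc x' ≤ q * x + c * y := hx'
    _ = (q * (x / y) + c) * y := by field_simp
    _ ≤ (q * (x / y) + c) * (C * y') := by gcongr
    _ = (q * C * (x / y) + c * C) * y' := by ring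

theorem stmt_12_general (q Chat C' : ℝ) (hq0 : 0 < q) (hChat : 0 < Chat)
    (hC' : 1 ≤ C') (hqC' : q * C' < 1)
    (e a : ℕ → ℝ) (he : ∀ n, 0 ≤ e n) (ha : ∀ n, 0 < a n) (N : ℕ)
    (hrec : ∀ n < N, e (n + 1) ≤ q * e n + Chat * a n)
    (hgrow : ∀ n < N, a n ≤ C' * a (n + 1)) :
    e N ≤ ((q * C') ^ N * e 0 / a 0 + Chat / (q * (1 - q * C'))) * a N := by
  have hgap : 0 < 1 - q * C' := by linarith
  have hratio : e N / a N ≤ (q * C') ^ N * (e 0 / a 0) + Chat * C' / (1 - q * C') :=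
    le_pow_mul_add_div_of_le_mul_add (r := fun n => e n / a n) (by positivity) hqC'
      (by positivity) fun n hn => div_le_mul_div_add_of_le_mul_add hq0.le hChat.le (he n) (ha n) (ha (n + 1))
        (hrec n hn) (hgrow n hn)
  have hfix : Chat * C' / (1 - q * C') ≤ Chat / (q * (1 - q * C')) := by
    rw [← div_div]
    gcongr
    rw [le_div_iff₀ hq0, mul_assoc, mul_comm C']
    exact mul_le_of_le_one_right hChat.le hqC'.le
  rw [← div_le_iff₀ (ha N), mul_div_assoc]
  linarith

/-- The recursion lemma used in the frozen Newton convergence proof: if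
`e_{n+1} ≤ q·e_n + Ĉ·a_n` and `a_n ≤ C'·a_{n+1}` for all `n < N`, then
`e_N ≤ ((qC')^N·e_0/a_0 + Ĉ/(q(1−qC')))·a_N`. -/
theorem stmt_12 (q Chat C' : ℝ) (hq0 : 0 < q) (hq1 : q < 1) (hChat : 0 < Chat)
    (hC' : 1 ≤ C') (hqC' : q * C' < 1)
    (e a : ℕ → ℝ) (he : ∀ n, 0 ≤ e n) (ha : ∀ n, 0 < a n) (N : ℕ)
    (hrec : ∀ n < N, e (n + 1) ≤ q * e n + Chat * a n)
    (hgrow : ∀ n < N, a n ≤ C' * a (n + 1)) :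
    e N ≤ ((q * C') ^ N * e 0 / a 0 + Chat / (q * (1 - q * C'))) * a N :=
  stmt_12_general q Chat C' hq0 hChat hC' hqC' e a he ha N hrec hgrow
end

section
/- Define ψ(t) := (−log(min{t, e^{−1}}))^{−1} for t > 0 (so ψ(t) = 1/(−log t) for 0 < t ≤ e^{−1} and ψ(t) = 1 for t ≥ e^{−1}). Then ψ(a + b) ≤ ψ(a) + ψ(b) for all a, b > 0. -/
open Real

lemma negMulLog_monoOn : MonotoneOn Real.negMulLog (Set.Icc 0 (Real.exp (-1))) := by
  apply monotoneOn_of_deriv_nonneg (convex_Icc _ _)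
    (Real.continuous_negMulLog.continuousOn)
  · intro x hx
    rw [interior_Icc] at hx
    exact (Real.differentiableAt_negMulLog hx.1.ne').differentiableWithinAt
  · intro x hx
    rw [interior_Icc] at hx
    rw [Real.deriv_negMulLog hx.1.ne']
    have : Real.log x ≤ -1 := by
      calc Real.log x ≤ Real.log (Real.exp (-1)) :=
        Real.log_le_log hx.1 hx.2.le
      _ = -1 := Real.log_exp _
    linarith

lemma h_mono (s t : ℝ) (hs : 0 < s) (hst : s ≤ t) :
    s * (-Real.log (min s (Real.exp (-1)))) ≤ t * (-Real.log (min t (Real.exp (-1)))) := by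
  have hE : (0:ℝ) < Real.exp (-1) := Real.exp_pos _
  have key : ∀ u : ℝ, 0 < u → u * (-Real.log (min u (Real.exp (-1)))) =
      max (Real.negMulLog (min u (Real.exp (-1)))) (min u (Real.exp (-1))) + (u - min u (Real.exp (-1))) := by
    intro u hu
    rcases le_total u (Real.exp (-1)) with h | h
    · rw [min_eq_left h]
      have : Real.exp (-1) ≤ Real.negMulLog u ∨ u ≤ Real.exp (-1) := Or.inr h
      have hlog : Real.log u ≤ -1 :=
        (Real.log_le_log hu h).trans_eq (Real.log_exp _)
      have : u ≤ Real.negMulLog u := by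
        rw [Real.negMulLog]; nlinarith
      rw [max_eq_left this]
      rw [Real.negMulLog]; ring
    · rw [min_eq_right h]
      have hlog : Real.negMulLog (Real.exp (-1)) = Real.exp (-1) := by
        simp [Real.negMulLog, Real.log_exp]
      rw [hlog, max_self, Real.log_exp]
      ring
  rw [key s hs, key t (hs.trans_le hst)]
  have hmins : min s (Real.exp (-1)) ≤ min t (Real.exp (-1)) :=
    min_le_min hst le_rfl
  have h1 : max (Real.negMulLog (min s (Real.exp (-1)))) (min s (Real.exp (-1))) ≤
      max (Real.negMulLog (min t (Real.exp (-1)))) (min t (Real.exp (-1)))  := by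
    apply max_le_max _ hmins
    exact negMulLog_monoOn ⟨le_min hs.le hE.le, min_le_right _ _⟩
      ⟨le_min (hs.trans_le hst).le hE.le, min_le_right _ _⟩ hmins
  have h2 : s - min s (Real.exp (-1)) ≤ t - min t (Real.exp (-1)) := by
    rcases le_total s (Real.exp (-1)) with h | h
    · rw [min_eq_left h]
      have := min_le_left t (Real.exp (-1))
      linarith
    · rw [min_eq_right h, min_eq_right (h.trans hst)]; linarith
  linarith

lemma L_pos (t : ℝ) (ht : 0 < t) : 0 < -Real.log (min t (Real.exp (-1))) := by
  have : Real.log (min t (Real.exp (-1))) ≤ -1 := by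
    calc Real.log (min t (Real.exp (-1))) ≤ Real.log (Real.exp (-1)) :=
      Real.log_le_log (lt_min ht (Real.exp_pos _)) (min_le_right _ _)
    _ = -1 := Real.log_exp _
  linarith

/-- Subadditivity of the logarithmic index function
`ψ(t) = (−log(min{t, e⁻¹}))⁻¹` (Lemma A.2 of the paper with `ν = 1`, `t₀ = e⁻¹`):
`ψ(a+b) ≤ ψ(a) + ψ(b)` for all `a, b > 0`. -/
theorem stmt_14 (a b : ℝ) (ha : 0 < a) (hb : 0 < b) :
    (-Real.log (min (a + b) (Real.exp (-1))))⁻¹ ≤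
      (-Real.log (min a (Real.exp (-1))))⁻¹ +
        (-Real.log (min b (Real.exp (-1))))⁻¹ := by
  set La := -Real.log (min a (Real.exp (-1))) with hLa
  set Lb := -Real.log (min b (Real.exp (-1))) with hLb
  set Ls := -Real.log (min (a + b) (Real.exp (-1))) with hLs
  have hLa0 : 0 < La := L_pos a ha
  have hLb0 : 0 < Lb := L_pos b hb
  have hLs0 : 0 < Ls := L_pos (a + b) (by linarith)
  have h1 : a * La ≤ (a + b) * Ls := h_mono a (a + b) ha (by linarith)
  have h2 : b * Lb ≤ (a + b) * Ls := h_mono b (a + b) hb (by linarith)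
  -- a / ((a+b) Ls) ≤ 1/La and similarly for b
  have ha1 : a / ((a + b) * Ls) ≤ La⁻¹ := by
    rw [div_le_iff₀ (by positivity), inv_mul_eq_div, le_div_iff₀ hLa0]
    linarith
  have hb1 : b / ((a + b) * Ls) ≤ Lb⁻¹ := by
    rw [div_le_iff₀ (by positivity), inv_mul_eq_div, le_div_iff₀ hLb0]
    linarith
  have : Ls⁻¹ = a / ((a + b) * Ls) + b / ((a + b) * Ls) := by
    field_simp
  rw [this]
  linarith
end
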